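/- arXiv:2307.04323 — 6 statements merged into one kernel-verified Lean document; each statement's English description precedes it below -/
import Mathlib

section
/- Let q be a prime power, m ≥ 2, and 2 ≤ δ ≤ q. Let D ⊆ PG(m−1,q) with |D| ≤ ((q^{m−1}−1)/(q−1))·(q+1−δ) − 1, and D^c = PG(m−1,q) \ D = {d₁,...,d_n}. Then the code C_{D^c} = {(x·d₁, ..., x·d_n) : x ∈ F_q^m} is a (2,δ)-locally repairable code: for every coordinate i there is a set R_i of at most δ+1 coordinates containing i such that the punctured code of C_{D^c} on R_i has minimum distance at least δ. -/
open Matrix Finset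

/-- Points of `PG(m-1,q)`: nonzero vectors whose first nonzero coordinate is `1`. -/
def projPoints (F : Type*) [Field F] [Fintype F] [DecidableEq F] (m : ℕ) :
    Finset (Fin m → F) :=
  Finset.univ.filter fun v => ∃ i, v i = 1 ∧ ∀ j, j < i → v j = 0

section Aux

variable {F : Type*} [Field F] [Fintype F] [DecidableEq F] {m : ℕ}

lemma mem_projPoints_iff {v : Fin m → F} :
    v ∈ projPoints F m ↔ ∃ i, v i = 1 ∧ ∀ j, j < i → v j = 0 := by
  simp [projPoints]

lemma projPoints_ne_zero {v : Fin m → F} (hv : v ∈ projPoints F m) : v ≠ 0 := by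
  obtain ⟨i, hi, -⟩ := mem_projPoints_iff.mp hv
  intro h
  rw [h] at hi
  simp at hi

/-- Two normalized points that are proportional are equal. -/
lemma projPoints_smul_eq {g h : Fin m → F} (hg : g ∈ projPoints F m)
    (hh : h ∈ projPoints F m) {c : F} (hc : h = c • g) : h = g := by
  obtain ⟨i, hgi, hgj⟩ := mem_projPoints_iff.mp hg
  obtain ⟨i', hhi, hhj⟩ := mem_projPoints_iff.mp hh
  have hc0 : c ≠ 0 := by
    rintro rfl
    rw [hc] at hhi
    simp at hhi
  have hii : i' = i := by
    rcases lt_trichotomy i' i with hlt | heq | hgt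
    · exfalso
      have h1 : h i' = c * g i' := by rw [hc]; rfl
      rw [hgj i' hlt, mul_zero] at h1
      rw [h1] at hhi
      exact one_ne_zero hhi.symm
    · exact heq
    · exfalso
      have h1 : h i = 0 := hhj i hgt
      have h2 : h i = c * g i := by rw [hc]; rfl
      rw [hgi, mul_one] at h2
      exact hc0 (h2 ▸ h1)
  have hc1 : c = 1 := by
    have h2 : h i = c * g i := by rw [hc]; rfl
    rw [hgi, mul_one] at h2
    rw [← h2, ← hii, hhi]
  rw [hc, hc1, one_smul]

/-- Distinct normalized points are linearly independent. -/
lemma projPoints_li {g h : Fin m → F} (hg : g ∈ projPoints F m)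
    (hh : h ∈ projPoints F m) (hne : g ≠ h) {a b : F}
    (hab : a • g + b • h = 0) : a = 0 ∧ b = 0 := by
  by_cases hb : b = 0
  · subst hb
    rw [zero_smul, add_zero] at hab
    rcases smul_eq_zero.mp hab with ha | hg0
    · exact ⟨ha, rfl⟩
    · exact absurd hg0 (projPoints_ne_zero hg)
  · exfalso
    have h1 : h = (-(b⁻¹ * a)) • g := by
      have h2 : b • h = -(a • g) := by
        rw [eq_neg_iff_add_eq_zero, add_comm]; exact hab
      calc h = b⁻¹ • (b • h) := by rw [smul_smul, inv_mul_cancel₀ hb, one_smul]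
        _ = b⁻¹ • (-(a • g)) := by rw [h2]
        _ = (-(b⁻¹ * a)) • g := by rw [smul_neg, smul_smul, neg_smul]
    exact hne (projPoints_smul_eq hg hh h1).symm

/-- Every nonzero vector is a nonzero multiple of a normalized point. -/
lemma exists_smul_projPoints (v : Fin m → F) (hv : v ≠ 0) :
    ∃ c : F, c ≠ 0 ∧ ∃ p ∈ projPoints F m, v = c • p := by
  have hne : (Finset.univ.filter fun i => v i ≠ 0).Nonempty := by
    rw [Finset.filter_nonempty_iff]
    obtain ⟨i, hi⟩ := Function.ne_iff.mp hv
    exact ⟨i, Finset.mem_univ i, hi⟩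
  set i := (Finset.univ.filter fun i => v i ≠ 0).min' hne with hidef
  have hvi : v i ≠ 0 := by
    have h1 := Finset.min'_mem _ hne
    rw [Finset.mem_filter] at h1
    exact h1.2
  have hjlt : ∀ j, j < i → v j = 0 := by
    intro j hj
    by_contra hvj
    have h1 : i ≤ j := Finset.min'_le _ j (Finset.mem_filter.mpr ⟨Finset.mem_univ j, hvj⟩)
    exact absurd hj (not_lt.mpr h1)
  refine ⟨v i, hvi, (v i)⁻¹ • v, ?_, ?_⟩
  · rw [mem_projPoints_iff]
    refine ⟨i, ?_, ?_⟩
    · simp [inv_mul_cancel₀ hvi]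
    · intro j hj
      simp [hjlt j hj]
  · rw [smul_smul, mul_inv_cancel₀ hvi, one_smul]

/-- Counting points of `PG` inside a submodule. -/
lemma card_projPoints_filter_mem (W : Submodule F (Fin m → F))
    [DecidablePred (· ∈ W)] :
    ((projPoints F m).filter (· ∈ W)).card * (Fintype.card F - 1)
      = (Finset.univ.filter (· ∈ W)).card - 1 := by
  classical
  have h0W : (0 : Fin m → F) ∈ W := W.zero_mem
  have hS : (Finset.univ.filter (· ∈ W)).card - 1
      = ((Finset.univ.filter (· ∈ W)).erase 0).card := by
    rw [Finset.card_erase_of_mem]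
    exact Finset.mem_filter.mpr ⟨Finset.mem_univ _, h0W⟩
  rw [hS]
  have hbij : (((projPoints F m).filter (· ∈ W)) ×ˢ ((Finset.univ : Finset F).erase 0)).card
      = ((Finset.univ.filter (· ∈ W)).erase 0).card := by
    apply Finset.card_bij (fun pc _ => pc.2 • pc.1)
    · rintro ⟨p, c⟩ hpc
      rw [Finset.mem_product] at hpc
      obtain ⟨hp, hc⟩ := hpc
      rw [Finset.mem_filter] at hp
      rw [Finset.mem_erase] at hc
      refine Finset.mem_erase.mpr
        ⟨?_, Finset.mem_filter.mpr ⟨Finset.mem_univ _, W.smul_mem _ hp.2⟩⟩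
      exact smul_ne_zero hc.1 (projPoints_ne_zero hp.1)
    · rintro ⟨p, c⟩ hpc ⟨p', c'⟩ hpc' heq
      rw [Finset.mem_product, Finset.mem_filter, Finset.mem_erase] at hpc hpc'
      have hc : c ≠ 0 := hpc.2.1
      have hc' : c' ≠ 0 := hpc'.2.1
      have hp : p ∈ projPoints F m := hpc.1.1
      have hp' : p' ∈ projPoints F m := hpc'.1.1
      simp only at heq
      have hpp' : p' = (c'⁻¹ * c) • p := by
        rw [mul_smul, heq, smul_smul, inv_mul_cancel₀ hc', one_smul]
      have hpe : p' = p := projPoints_smul_eq hp hp' hpp'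
      subst hpe
      have hcc : c = c' := by
        by_contra hne
        have hz : (c - c') • p' = 0 := by rw [sub_smul, heq, sub_self]
        rcases smul_eq_zero.mp hz with h | h
        · exact hne (sub_eq_zero.mp h)
        · exact projPoints_ne_zero hp h
      simp [hcc]
    · intro v hv
      rw [Finset.mem_erase, Finset.mem_filter] at hv
      obtain ⟨hv0, -, hvW⟩ := hv
      obtain ⟨c, hc, p, hp, hvcp⟩ := exists_smul_projPoints v hv0
      have hpW : p ∈ W := by
        have h1 : p = c⁻¹ • v := by
          rw [hvcp, smul_smul, inv_mul_cancel₀ hc, one_smul]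
        rw [h1]
        exact W.smul_mem _ hvW
      refine ⟨⟨p, c⟩, ?_, hvcp.symm⟩
      rw [Finset.mem_product]
      exact ⟨Finset.mem_filter.mpr ⟨hp, hpW⟩, Finset.mem_erase.mpr ⟨hc, Finset.mem_univ _⟩⟩
  rw [← hbij, Finset.card_product, Finset.card_erase_of_mem (Finset.mem_univ _),
    Finset.card_univ]

lemma geom_sum_mul_nat (r n : ℕ) :
    (∑ k ∈ Finset.range n, (r + 1) ^ k) * (r + 1 - 1) = (r + 1) ^ n - 1 := by
  simp only [Nat.add_sub_cancel]
  induction n with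
  | zero => simp
  | succ n ih =>
    rw [Finset.sum_range_succ, add_mul, ih, pow_succ]
    have h1 : 1 ≤ (r + 1) ^ n := Nat.one_le_pow _ _ (Nat.succ_pos r)
    set a := (r + 1) ^ n with ha
    have h2 : a * (r + 1) = a + a * r := by ring
    omega

lemma geom_sum_mul_nat' (q n : ℕ) (h : 1 ≤ q) :
    (∑ k ∈ Finset.range n, q ^ k) * (q - 1) = q ^ n - 1 := by
  obtain ⟨r, rfl⟩ : ∃ r, q = r + 1 := ⟨q - 1, by omega⟩
  exact geom_sum_mul_nat r n

lemma nat_succ_mul_pred (q : ℕ) (h : 1 ≤ q) : (q + 1) * (q - 1) = q ^ 2 - 1 := by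
  obtain ⟨r, rfl⟩ : ∃ r, q = r + 1 := ⟨q - 1, by omega⟩
  simp only [Nat.add_sub_cancel]
  have h1 : (r + 1) ^ 2 = (r + 1 + 1) * r + 1 := by ring
  omega

end Aux

/-- If `|D| ≤ ((q^{m-1}-1)/(q-1))(q+1-δ) - 1`, then the punctured simplex code `C_{D^c}` is a
`(2,δ)`-LRC: every coordinate `g ∈ D^c` lies in a repair set `R` of at most `δ+1` coordinates
on which the punctured code has minimum distance at least `δ`. -/
theorem stmt3 {F : Type*} [Field F] [Fintype F] [DecidableEq F] {m δ q : ℕ}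
    (hq : Fintype.card F = q) (hm : 2 ≤ m) (hδ : 2 ≤ δ) (hδq : δ ≤ q)
    (D : Finset (Fin m → F)) (hD : D ⊆ projPoints F m)
    (hcard : D.card ≤ (q ^ (m - 1) - 1) / (q - 1) * (q + 1 - δ) - 1) :
    ∀ g ∈ projPoints F m \ D, ∃ R : Finset (Fin m → F),
      R ⊆ projPoints F m \ D ∧ g ∈ R ∧ R.card ≤ δ + 1 ∧
      ∀ x : Fin m → F, (∃ d ∈ R, x ⬝ᵥ d ≠ 0) →
        δ ≤ (R.filter fun d => x ⬝ᵥ d ≠ 0).card := by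
  classical
  subst hq
  set q := Fintype.card F with hqdef
  have hq2 : 2 ≤ q := Fintype.one_lt_card
  intro g hgmem
  rw [Finset.mem_sdiff] at hgmem
  obtain ⟨hgP, hgD⟩ := hgmem
  -- the line through g and h
  set line : (Fin m → F) → Finset (Fin m → F) :=
    fun h => (projPoints F m).filter (· ∈ Submodule.span F ({g, h} : Set (Fin m → F)))
      with hlinedef
  have hg_line : ∀ h, g ∈ line h := by
    intro h
    exact Finset.mem_filter.mpr ⟨hgP, Submodule.subset_span (Set.mem_insert _ _)⟩
  have hh_line : ∀ h, h ∈ projPoints F m → h ∈ line h := by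
    intro h hh
    exact Finset.mem_filter.mpr
      ⟨hh, Submodule.subset_span (Set.mem_insert_of_mem _ rfl)⟩
  have hline_sub : ∀ h, line h ⊆ projPoints F m := fun h => Finset.filter_subset _ _
  -- every line through g has q+1 points
  have hline_card : ∀ h ∈ (projPoints F m).erase g, (line h).card = q + 1 := by
    intro h hh
    rw [Finset.mem_erase] at hh
    obtain ⟨hhg, hhP⟩ := hh
    have hli : ∀ a b : F, a • g + b • h = 0 → a = 0 ∧ b = 0 :=
      fun a b hab => projPoints_li hgP hhP (Ne.symm hhg) hab
    -- the span of {g, h} has q^2 elements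
    have hWcard : (Finset.univ.filter
        (· ∈ Submodule.span F ({g, h} : Set (Fin m → F)))).card = q ^ 2 := by
      have hbij : ((Finset.univ : Finset (F × F))).card
          = (Finset.univ.filter
              (· ∈ Submodule.span F ({g, h} : Set (Fin m → F)))).card := by
        apply Finset.card_bij (fun ab _ => ab.1 • g + ab.2 • h)
        · rintro ⟨a, b⟩ -
          refine Finset.mem_filter.mpr ⟨Finset.mem_univ _, ?_⟩
          exact Submodule.add_mem _
            (Submodule.smul_mem _ _ (Submodule.subset_span (Set.mem_insert _ _)))
            (Submodule.smul_mem _ _ (Submodule.subset_span (Set.mem_insert_of_mem _ rfl)))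
        · rintro ⟨a, b⟩ - ⟨a', b'⟩ - heq
          simp only at heq
          have hz : (a - a') • g + (b - b') • h = 0 := by
            rw [sub_smul, sub_smul, sub_add_sub_comm, heq, sub_self]
          obtain ⟨h1, h2⟩ := hli _ _ hz
          have e1 : a = a' := sub_eq_zero.mp h1
          have e2 : b = b' := sub_eq_zero.mp h2
          simp [e1, e2]
        · intro v hv
          rw [Finset.mem_filter] at hv
          obtain ⟨a, b, hab⟩ := Submodule.mem_span_pair.mp hv.2
          exact ⟨⟨a, b⟩, Finset.mem_univ _, hab⟩
      rw [← hbij, Finset.card_univ, Fintype.card_prod, sq]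
    have hmain := card_projPoints_filter_mem (F := F) (m := m)
      (Submodule.span F ({g, h} : Set (Fin m → F)))
    rw [hWcard, ← nat_succ_mul_pred q (by omega)] at hmain
    exact Nat.eq_of_mul_eq_mul_right (by omega : 0 < q - 1) hmain
  -- line p = line h iff p ∈ line h, for p,h ∈ PG \ {g}
  have hline_eq : ∀ h ∈ (projPoints F m).erase g, ∀ p ∈ (projPoints F m).erase g,
      (p ∈ line h ↔ line p = line h) := by
    intro h hh p hp
    rw [Finset.mem_erase] at hh hp
    obtain ⟨hhg, hhP⟩ := hh
    obtain ⟨hpg, hpP⟩ := hp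
    constructor
    · intro hmem
      rw [Finset.mem_filter] at hmem
      have hspan : Submodule.span F ({g, p} : Set (Fin m → F))
          = Submodule.span F ({g, h} : Set (Fin m → F)) := by
        apply le_antisymm
        · apply Submodule.span_le.mpr
          rw [Set.insert_subset_iff, Set.singleton_subset_iff]
          exact ⟨Submodule.subset_span (Set.mem_insert _ _), hmem.2⟩
        · apply Submodule.span_le.mpr
          rw [Set.insert_subset_iff, Set.singleton_subset_iff]
          refine ⟨Submodule.subset_span (Set.mem_insert _ _), ?_⟩
          -- h ∈ span {g, p}
          obtain ⟨a, b, hab⟩ := Submodule.mem_span_pair.mp hmem.2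
          have hb : b ≠ 0 := by
            rintro rfl
            rw [zero_smul, add_zero] at hab
            exact hpg (projPoints_smul_eq hgP hpP hab.symm)
          have hkey : (-(b⁻¹ * a)) • g + b⁻¹ • p = h := by
            rw [← hab, smul_add, smul_smul, smul_smul, inv_mul_cancel₀ hb, one_smul,
              neg_smul]
            abel
          exact Submodule.mem_span_pair.mpr ⟨-(b⁻¹ * a), b⁻¹, hkey⟩
      simp only [hlinedef]
      rw [hspan]
    · intro heq
      have hpline : p ∈ line p :=
        Finset.mem_filter.mpr ⟨hpP, Submodule.subset_span (Set.mem_insert_of_mem _ rfl)⟩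
      rw [heq] at hpline
      exact hpline
  -- fibers of the line map
  have hfiber : ∀ h ∈ (projPoints F m).erase g,
      ((projPoints F m).erase g).filter (fun p => line p = line h) = (line h).erase g := by
    intro h hh
    ext p
    rw [Finset.mem_filter, Finset.mem_erase, Finset.mem_erase]
    constructor
    · rintro ⟨⟨hpg, hpP⟩, hl⟩
      refine ⟨hpg, ?_⟩
      exact (hline_eq h hh p (Finset.mem_erase.mpr ⟨hpg, hpP⟩)).mpr hl
    · rintro ⟨hpg, hpl⟩
      have hpP : p ∈ projPoints F m := hline_sub h hpl
      exact ⟨⟨hpg, hpP⟩,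
        (hline_eq h hh p (Finset.mem_erase.mpr ⟨hpg, hpP⟩)).mp hpl⟩
  -- set of lines through g
  set Lines : Finset (Finset (Fin m → F)) := ((projPoints F m).erase g).image line
    with hLines
  -- cardinality of projPoints
  set A : ℕ := ∑ k ∈ Finset.range (m - 1), q ^ k with hA
  have hA1 : 1 ≤ A := by
    rw [hA]
    calc 1 = q ^ 0 := (pow_zero q).symm
      _ ≤ ∑ k ∈ Finset.range (m - 1), q ^ k :=
        Finset.single_le_sum (f := fun k => q ^ k) (fun _ _ => Nat.zero_le _)
          (Finset.mem_range.mpr (by omega))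
  have hPGcard : (projPoints F m).card = ∑ k ∈ Finset.range m, q ^ k := by
    have h1 := card_projPoints_filter_mem (F := F) (m := m) ⊤
    have h2 : (projPoints F m).filter (· ∈ (⊤ : Submodule F (Fin m → F)))
        = projPoints F m := Finset.filter_true_of_mem (fun _ _ => Submodule.mem_top)
    have h3 : (Finset.univ.filter (· ∈ (⊤ : Submodule F (Fin m → F))))
        = (Finset.univ : Finset (Fin m → F)) :=
      Finset.filter_true_of_mem (fun _ _ => Submodule.mem_top)
    rw [h2, h3, Finset.card_univ] at h1
    have h4 : Fintype.card (Fin m → F) = q ^ m := by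
      rw [Fintype.card_fun, Fintype.card_fin]
    rw [h4] at h1
    have h5 := geom_sum_mul_nat' q m (by omega)
    rw [← h5] at h1
    exact Nat.eq_of_mul_eq_mul_right (by omega : 0 < q - 1) h1
  have hsum_split : ∑ k ∈ Finset.range m, q ^ k = A * q + 1 := by
    have hm1 : m - 1 + 1 = m := by omega
    rw [← hm1, Finset.sum_range_succ']
    simp only [pow_zero, pow_succ]
    rw [← Finset.sum_mul]
  -- number of lines through g is A
  have hLinescard : Lines.card = A := by
    have h1 : ((projPoints F m).erase g).card
        = ∑ L ∈ Lines, (((projPoints F m).erase g).filter (fun p => line p = L)).card :=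
      Finset.card_eq_sum_card_fiberwise (fun p hp => Finset.mem_image_of_mem line hp)
    have h2 : ∀ L ∈ Lines,
        (((projPoints F m).erase g).filter (fun p => line p = L)).card = q := by
      intro L hL
      obtain ⟨h, hh, rfl⟩ := Finset.mem_image.mp hL
      rw [hfiber h hh, Finset.card_erase_of_mem (hg_line h), hline_card h hh]
      omega
    rw [Finset.sum_congr rfl h2, Finset.sum_const, smul_eq_mul] at h1
    have h3 : ((projPoints F m).erase g).card = A * q := by
      rw [Finset.card_erase_of_mem hgP, hPGcard, hsum_split]
      omega
    rw [h3] at h1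
    exact Nat.eq_of_mul_eq_mul_right (by omega : 0 < q) h1.symm
  -- there is a line with few points of D
  have key : ∃ h ∈ (projPoints F m).erase g, ((line h) ∩ D).card ≤ q - δ := by
    by_contra hall
    push_neg at hall
    have hDsub : D ⊆ (projPoints F m).erase g := by
      intro d hd
      exact Finset.mem_erase.mpr ⟨fun h => hgD (h ▸ hd), hD hd⟩
    have h1 : D.card = ∑ L ∈ Lines, (D.filter (fun p => line p = L)).card :=
      Finset.card_eq_sum_card_fiberwise
        (fun d hd => Finset.mem_image_of_mem line (hDsub hd))
    have h2 : ∀ L ∈ Lines, q - δ + 1 ≤ (D.filter (fun p => line p = L)).card := by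
      intro L hL
      obtain ⟨h, hh, rfl⟩ := Finset.mem_image.mp hL
      have hfd : D.filter (fun p => line p = line h) = (line h) ∩ D := by
        ext d
        rw [Finset.mem_filter, Finset.mem_inter]
        constructor
        · rintro ⟨hd, hl⟩
          exact ⟨(hline_eq h hh d (hDsub hd)).mpr hl, hd⟩
        · rintro ⟨hl, hd⟩
          exact ⟨hd, (hline_eq h hh d (hDsub hd)).mp hl⟩
      rw [hfd]
      have := hall h hh
      omega
    have h3 : Lines.card * (q - δ + 1) ≤ D.card := by
      rw [h1]
      calc Lines.card * (q - δ + 1) = ∑ _L ∈ Lines, (q - δ + 1) := by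
            rw [Finset.sum_const, smul_eq_mul]
        _ ≤ ∑ L ∈ Lines, (D.filter (fun p => line p = L)).card :=
            Finset.sum_le_sum h2
    rw [hLinescard] at h3
    -- rewrite the hypothesis bound
    have hdiv : (q ^ (m - 1) - 1) / (q - 1) = A := by
      have := geom_sum_mul_nat' q (m - 1) (by omega)
      rw [← hA] at this
      exact Nat.div_eq_of_eq_mul_left (by omega : 0 < q - 1) this.symm
    rw [hdiv] at hcard
    have hq1δ : q + 1 - δ = q - δ + 1 := by omega
    rw [hq1δ] at hcard
    have hpos : 0 < A * (q - δ + 1) := Nat.mul_pos (by omega) (by omega)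
    set t := A * (q - δ + 1) with ht
    omega
  obtain ⟨h, hh, hLD⟩ := key
  have hhE := Finset.mem_erase.mp hh
  -- construct the repair set R
  have hcardL : (line h).card = q + 1 := hline_card h hh
  have hcard_sdiff : δ + 1 ≤ ((line h) \ D).card := by
    have := Finset.card_inter_add_card_sdiff (line h) D
    omega
  have hgLD : g ∈ (line h) \ D := Finset.mem_sdiff.mpr ⟨hg_line h, hgD⟩
  have hScard : δ ≤ (((line h) \ D).erase g).card := by
    rw [Finset.card_erase_of_mem hgLD]
    omega
  obtain ⟨T, hTS, hTcard⟩ := Finset.exists_subset_card_eq hScard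
  set R : Finset (Fin m → F) := insert g T with hR
  have hgT : g ∉ T := fun hgt => (Finset.mem_erase.mp (hTS hgt)).1 rfl
  have hRcard : R.card = δ + 1 := by
    rw [hR, Finset.card_insert_of_notMem hgT, hTcard]
  have hRsub : R ⊆ (line h) \ D := by
    rw [hR]
    exact Finset.insert_subset hgLD (hTS.trans (Finset.erase_subset _ _))
  refine ⟨R, ?_, Finset.mem_insert_self g T, le_of_eq hRcard, ?_⟩
  · exact hRsub.trans (Finset.sdiff_subset_sdiff (hline_sub h) Finset.Subset.rfl)
  · -- the distance property
    rintro x ⟨d0, hd0R, hx0⟩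
    have hspanR : ∀ d ∈ R, ∃ a b : F, a • g + b • h = d := by
      intro d hd
      have : d ∈ line h := (Finset.mem_sdiff.mp (hRsub hd)).1
      exact Submodule.mem_span_pair.mp (Finset.mem_filter.mp this).2
    have hPR : ∀ d ∈ R, d ∈ projPoints F m := by
      intro d hd
      exact hline_sub h (Finset.mem_sdiff.mp (hRsub hd)).1
    set u : F := x ⬝ᵥ g with hu
    set w : F := x ⬝ᵥ h with hw
    have hdot : ∀ a b : F, x ⬝ᵥ (a • g + b • h) = a * u + b * w := by
      intro a b
      rw [dotProduct_add]
      simp [hu, hw, dotProduct_smul, smul_eq_mul]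
    -- at most one zero in R
    have hZ : (R.filter (fun d => ¬ x ⬝ᵥ d ≠ 0)).card ≤ 1 := by
      rw [Finset.card_le_one]
      intro p hp p' hp'
      rw [Finset.mem_filter, not_not] at hp hp'
      obtain ⟨hpR, hpz⟩ := hp
      obtain ⟨hp'R, hp'z⟩ := hp'
      by_contra hne
      obtain ⟨a₁, a₂, hpr⟩ := hspanR p hpR
      obtain ⟨b₁, b₂, hp'r⟩ := hspanR p' hp'R
      obtain ⟨c₁, c₂, hd0r⟩ := hspanR d0 hd0R
      have eq1 : a₁ * u + a₂ * w = 0 := by rw [← hdot, hpr, hpz]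
      have eq2 : b₁ * u + b₂ * w = 0 := by rw [← hdot, hp'r, hp'z]
      have hdet : a₁ * b₂ - a₂ * b₁ ≠ 0 := by
        intro hdet0
        have hdet0' : a₁ * b₂ = a₂ * b₁ := by
          rwa [sub_eq_zero] at hdet0
        have hkey : b₂ • p = a₂ • p' := by
          calc b₂ • p = (b₂ * a₁) • g + (b₂ * a₂) • h := by
                rw [← hpr, smul_add, smul_smul, smul_smul]
            _ = (a₂ * b₁) • g + (a₂ * b₂) • h := by
                rw [mul_comm b₂ a₁, hdet0', mul_comm b₂ a₂]
            _ = a₂ • p' := by rw [← hp'r, smul_add, smul_smul, smul_smul]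
        by_cases hb₂ : b₂ = 0
        · subst hb₂
          rw [zero_smul] at hkey
          by_cases ha₂ : a₂ = 0
          · subst ha₂
            rw [zero_smul, add_zero] at hpr hp'r
            have hpg : p = g := projPoints_smul_eq hgP (hPR p hpR) hpr.symm
            have hp'g : p' = g := projPoints_smul_eq hgP (hPR p' hp'R) hp'r.symm
            exact hne (hpg.trans hp'g.symm)
          · have : p' = 0 := by
              rcases smul_eq_zero.mp hkey.symm with h | h
              · exact absurd h ha₂
              · exact h
            exact projPoints_ne_zero (hPR p' hp'R) this
        · have hpp' : p = (b₂⁻¹ * a₂) • p' := by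
            rw [mul_smul, ← hkey, smul_smul, inv_mul_cancel₀ hb₂, one_smul]
          exact hne (projPoints_smul_eq (hPR p' hp'R) (hPR p hpR) hpp')
      have hu0 : u = 0 := by
        have h3 : u * (a₁ * b₂ - a₂ * b₁) = 0 := by
          linear_combination b₂ * eq1 - a₂ * eq2
        rcases mul_eq_zero.mp h3 with h | h
        · exact h
        · exact absurd h hdet
      have hw0 : w = 0 := by
        have h4 : w * (a₁ * b₂ - a₂ * b₁) = 0 := by
          linear_combination (-b₁) * eq1 + a₁ * eq2
        rcases mul_eq_zero.mp h4 with h | h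
        · exact h
        · exact absurd h hdet
      apply hx0
      rw [← hd0r, hdot, hu0, hw0]
      ring
    have hsplit := Finset.card_filter_add_card_filter_not
      (s := R) (p := fun d => x ⬝ᵥ d ≠ 0)
    omega
end

section
/- Under the hypotheses of the disjoint-supports construction (A₁,...,A_t nonempty pairwise disjoint subsets of [m], sorted so that the sizes take u distinct values s₁ < s₂ < ... < s_u with multiplicities i₁, i₂−i₁, ..., i_u−i_{u−1}), if max{i₁, i₂−i₁, ..., i_u−i_{u−1}} ≤ q−1, then the code C_{D^c} of length n = (q^m−1)/(q−1) − (Σ_{i=1}^t q^{|A_i|} − t)/(q−1), dimension m, and distance d = q^{m−1} − Σ_{i=1}^t q^{|A_i|−1} meets the Griesmer bound with equality: n = Σ_{i=0}^{m−1} ⌈d/q^i⌉. -/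
open Matrix Finset

/-- If each size among `|A_1|,...,|A_t|` occurs with multiplicity at most `q-1`
(the `A_i` being nonempty and pairwise disjoint), then the punctured simplex code `C_{D^c}`,
of length `n = (q^m-1)/(q-1) - (Σ q^{|A_i|} - t)/(q-1)`, dimension `m` and distance
`d = q^{m-1} - Σ q^{|A_i|-1}`, meets the Griesmer bound with equality:
`n = Σ_{i=0}^{m-1} ⌈d/q^i⌉`. -/
theorem stmt9 {F : Type*} [Field F] [Fintype F] [DecidableEq F] {m t q : ℕ}
    (hq : Fintype.card F = q) (hm : 1 < m) (ht : 1 < t)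
    (A : Fin t → Finset (Fin m)) (hne : ∀ i, (A i).Nonempty)
    (hdisj : ∀ i j, i ≠ j → Disjoint (A i) (A j))
    (hmult : ∀ v : ℕ, (Finset.univ.filter fun i => (A i).card = v).card ≤ q - 1) :
    let n := (q ^ m - 1) / (q - 1) - ((∑ i, q ^ (A i).card) - t) / (q - 1)
    let d := q ^ (m - 1) - ∑ i, q ^ ((A i).card - 1)
    (n : ℤ) = ∑ i ∈ Finset.range m, ⌈(d : ℚ) / (q : ℚ) ^ i⌉ := by
  intro n d
  have hq2 : 2 ≤ q := hq ▸ Fintype.one_lt_card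
  set e : Fin t → ℕ := fun j => (A j).card - 1 with he_def
  set S : ℕ := ∑ j, q ^ (e j) with hS_def
  have ha1 : ∀ j, 1 ≤ (A j).card := fun j => Finset.card_pos.2 (hne j)
  have hsum : ∑ j, (A j).card ≤ m := by
    have h1 : (Finset.univ.biUnion A).card = ∑ j, (A j).card :=
      Finset.card_biUnion (fun x _ y _ hxy => hdisj x y hxy)
    calc ∑ j, (A j).card = (Finset.univ.biUnion A).card := h1.symm
      _ ≤ Fintype.card (Fin m) := Finset.card_le_univ _
      _ = m := Fintype.card_fin m
  have haj : ∀ j, (A j).card + 1 ≤ m := by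
    intro j
    obtain ⟨j', hj'⟩ := Fintype.exists_ne_of_one_lt_card (by simpa using ht) j
    have hp : ∑ i ∈ ({j, j'} : Finset (Fin t)), (A i).card = (A j).card + (A j').card :=
      Finset.sum_pair (Ne.symm hj')
    have h2 : ∑ i ∈ ({j, j'} : Finset (Fin t)), (A i).card ≤ ∑ i, (A i).card :=
      Finset.sum_le_sum_of_subset (Finset.subset_univ _)
    have := ha1 j'
    omega
  have hejm : ∀ j, e j < m - 1 := by
    intro j; have h1 := ha1 j; have h2 := haj j; simp only [he_def]; omega
  -- key carry-free lemma
  have key : ∀ i : ℕ,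
      (∑ j ∈ univ.filter (fun j => e j < i), q ^ e j) < q ^ i := by
    intro i
    induction i with
    | zero => simp
    | succ i ih =>
      have hsplit : (univ.filter (fun j => e j < i + 1)) =
          (univ.filter (fun j => e j < i)) ∪ (univ.filter (fun j => e j = i)) := by
        ext j; simp only [Finset.mem_filter, Finset.mem_union, Finset.mem_univ, true_and]
        omega
      have hdisj2 : Disjoint (univ.filter (fun j => e j < i))
          (univ.filter (fun j => e j = i)) := by
        simp only [Finset.disjoint_left, Finset.mem_filter, Finset.mem_univ, true_and]
        omega
      rw [hsplit, Finset.sum_union hdisj2]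
      have h2 : ∑ j ∈ univ.filter (fun j => e j = i), q ^ e j
          = (univ.filter (fun j => e j = i)).card * q ^ i := by
        rw [Finset.sum_congr rfl (fun j hj => by
          rw [(Finset.mem_filter.1 hj).2]), Finset.sum_const, smul_eq_mul]
      have hfe : (univ.filter (fun j => e j = i)) =
          (univ.filter (fun j => (A j).card = i + 1)) := by
        ext j; simp only [Finset.mem_filter, Finset.mem_univ, true_and]
        have := ha1 j; simp only [he_def]; omega
      have h3 : (univ.filter (fun j => e j = i)).card ≤ q - 1 := by
        rw [hfe]; exact hmult (i + 1)
      have h4 : ∑ j ∈ univ.filter (fun j => e j = i), q ^ e j ≤ (q - 1) * q ^ i := by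
        rw [h2]; exact Nat.mul_le_mul_right _ h3
      calc (∑ j ∈ univ.filter (fun j => e j < i), q ^ e j)
            + ∑ j ∈ univ.filter (fun j => e j = i), q ^ e j
          < q ^ i + (q - 1) * q ^ i := by
            exact Nat.add_lt_add_of_lt_of_le ih h4
        _ = (1 + (q - 1)) * q ^ i := by ring
        _ = q * q ^ i := by congr 1; omega
        _ = q ^ (i + 1) := by rw [pow_succ, mul_comm]
  -- splitting of S by threshold i
  set Si : ℕ → ℕ := fun i => ∑ j ∈ univ.filter (fun j => i ≤ e j), q ^ (e j - i) with hSi_def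
  have split : ∀ i, S = Si i * q ^ i + (∑ j ∈ univ.filter (fun j => e j < i), q ^ e j) := by
    intro i
    have h1 : S = (∑ j ∈ univ.filter (fun j => i ≤ e j), q ^ e j)
        + ∑ j ∈ univ.filter (fun j => e j < i), q ^ e j := by
      rw [hS_def]
      rw [← Finset.sum_filter_add_sum_filter_not univ (fun j => i ≤ e j) (fun j => q ^ e j)]
      congr 1
      apply Finset.sum_congr _ (fun _ _ => rfl)
      ext j; simp [Nat.not_le]
    rw [h1]
    congr 1
    rw [hSi_def, Finset.sum_mul]
    apply Finset.sum_congr rfl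
    intro j hj
    have hij : i ≤ e j := (Finset.mem_filter.1 hj).2
    rw [← pow_add]
    congr 1
    omega
  have hSlt : S < q ^ (m - 1) := by
    have h1 : (univ.filter (fun j => e j < m - 1)) = univ := by
      ext j; simp [hejm j]
    have := key (m - 1)
    rw [h1] at this
    exact this
  -- floor of S / q^i
  have hfloor : ∀ i : ℕ, ⌊(S : ℚ) / (q : ℚ) ^ i⌋ = (Si i : ℤ) := by
    intro i
    have hqi : (0:ℚ) < (q:ℚ) ^ i := by positivity
    rw [Int.floor_eq_iff]
    constructor
    · rw [le_div_iff₀ hqi]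
      have := split i
      have h1 : Si i * q ^ i ≤ S := by omega
      exact_mod_cast Nat.cast_le.2 h1
    · rw [div_lt_iff₀ hqi]
      have h1 : S < (Si i + 1) * q ^ i := by
        have h2 := split i
        have h3 := key i
        nlinarith
      calc (S:ℚ) < ((Si i + 1) * q ^ i : ℕ) := by exact_mod_cast h1
        _ = ((Si i : ℤ) + 1 : ℚ) * (q:ℚ) ^ i := by push_cast; ring
  -- ceiling of d / q^i for i < m
  have hceil : ∀ i ∈ Finset.range m,
      ⌈(d : ℚ) / (q : ℚ) ^ i⌉ = (q ^ (m - 1 - i) : ℕ) - (Si i : ℤ) := by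
    intro i hi
    have him : i < m := Finset.mem_range.1 hi
    have hqi : (0:ℚ) < (q:ℚ) ^ i := by positivity
    have hd : (d : ℚ) = (q:ℚ) ^ (m - 1) - (S : ℚ) := by
      have hd' : d = q ^ (m - 1) - S := rfl
      rw [hd', Nat.cast_sub (le_of_lt hSlt)]
      push_cast
      ring
    have hpow : (q:ℚ) ^ (m - 1) = (q:ℚ) ^ (m - 1 - i) * (q:ℚ) ^ i := by
      rw [← pow_add]
      congr 1
      omega
    have hx : (d : ℚ) / (q : ℚ) ^ i = -((S:ℚ) / (q:ℚ)^i) + ((q ^ (m - 1 - i) : ℕ) : ℤ) := by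
      rw [hd, hpow]
      push_cast
      field_simp
      ring
    rw [hx, Int.ceil_add_intCast, Int.ceil_neg, hfloor i]
    ring
  -- geometric sums over ℕ
  have geom : ∀ k : ℕ, q ^ k - 1 = (∑ i ∈ Finset.range k, q ^ i) * (q - 1) := by
    intro k
    have h := geom_sum_mul (q:ℤ) k
    have h1 : ((q ^ k - 1 : ℕ) : ℤ) = (((∑ i ∈ Finset.range k, q ^ i) * (q - 1) : ℕ) : ℤ) := by
      rw [Nat.cast_sub (Nat.one_le_pow _ _ (by omega)), Nat.cast_mul,
        Nat.cast_sub (by omega : 1 ≤ q)]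
      push_cast
      push_cast at h
      linarith
    exact_mod_cast h1
  have hNdiv : (q ^ m - 1) / (q - 1) = ∑ i ∈ Finset.range m, q ^ i := by
    rw [geom m, Nat.mul_div_cancel _ (by omega : 0 < q - 1)]
  -- T computation
  set T : ℕ := ∑ j, ∑ i ∈ Finset.range ((A j).card), q ^ i with hT_def
  have htQ : t ≤ ∑ j, q ^ (A j).card := by
    calc t = ∑ _j : Fin t, 1 := by simp
      _ ≤ ∑ j, q ^ (A j).card := Finset.sum_le_sum (fun j _ => Nat.one_le_pow _ _ (by omega))
  have hQt : (∑ j, q ^ (A j).card) - t = T * (q - 1) := by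
    have h1 : (((∑ j, q ^ (A j).card) - t : ℕ) : ℤ) = ((T * (q - 1) : ℕ) : ℤ) := by
      rw [Nat.cast_sub htQ, Nat.cast_mul, Nat.cast_sub (by omega : 1 ≤ q)]
      push_cast
      rw [hT_def]
      push_cast
      have hrhs : ∑ i : Fin t, (∑ x ∈ Finset.range ((A i).card), (q:ℤ) ^ x) * ((q:ℤ) - 1)
          = ∑ i : Fin t, ((q:ℤ) ^ ((A i).card) - 1) :=
        Finset.sum_congr rfl fun j _ => geom_sum_mul _ _
      rw [Finset.sum_mul, hrhs, Finset.sum_sub_distrib]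
      simp [Finset.card_univ]
    exact_mod_cast h1
  have hTdiv : ((∑ j, q ^ (A j).card) - t) / (q - 1) = T := by
    rw [hQt, Nat.mul_div_cancel _ (by omega : 0 < q - 1)]
  -- swap: T = ∑_{i<m} Si i
  have hTswap : ∑ i ∈ Finset.range m, Si i = T := by
    rw [hT_def, hSi_def]
    calc ∑ i ∈ Finset.range m, ∑ j ∈ univ.filter (fun j => i ≤ e j), q ^ (e j - i)
        = ∑ i ∈ Finset.range m, ∑ j, if i ≤ e j then q ^ (e j - i) else 0 := by
          simp [Finset.sum_filter]
      _ = ∑ j, ∑ i ∈ Finset.range m, if i ≤ e j then q ^ (e j - i) else 0 :=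
          Finset.sum_comm
      _ = ∑ j, ∑ i ∈ Finset.range (e j + 1), q ^ (e j - i) := by
          refine Finset.sum_congr rfl fun j _ => ?_
          rw [← Finset.sum_filter]
          apply Finset.sum_congr _ (fun _ _ => rfl)
          ext k
          simp only [Finset.mem_filter, Finset.mem_range, Nat.lt_succ_iff]
          have := hejm j
          omega
      _ = ∑ j, ∑ i ∈ Finset.range (e j + 1), q ^ i := by
          refine Finset.sum_congr rfl fun j _ => ?_
          have := Finset.sum_range_reflect (fun i => q ^ i) (e j + 1)
          simpa using this
      _ = ∑ j, ∑ i ∈ Finset.range ((A j).card), q ^ i := by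
          refine Finset.sum_congr rfl fun j _ => ?_
          have h1 := ha1 j
          have hej : e j + 1 = (A j).card := by simp only [he_def]; omega
          rw [hej]
  -- bound T ≤ N
  have hSi_le : ∀ i ∈ Finset.range m, Si i ≤ q ^ (m - 1 - i) := by
    intro i hi
    have him : i < m := Finset.mem_range.1 hi
    have h1 : Si i * q ^ i ≤ S := by have := split i; omega
    have h2 : Si i * q ^ i < q ^ (m - 1 - i) * q ^ i := by
      rw [← pow_add]
      have : m - 1 - i + i = m - 1 := by omega
      rw [this]
      omega
    have h3 : Si i < q ^ (m - 1 - i) :=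
      Nat.lt_of_mul_lt_mul_right h2
    omega
  have hTN : T ≤ ∑ i ∈ Finset.range m, q ^ i := by
    rw [← hTswap]
    calc ∑ i ∈ Finset.range m, Si i ≤ ∑ i ∈ Finset.range m, q ^ (m - 1 - i) :=
          Finset.sum_le_sum hSi_le
      _ = ∑ i ∈ Finset.range m, q ^ i := Finset.sum_range_reflect (fun i => q ^ i) m
  -- final assembly
  have hn : n = (∑ i ∈ Finset.range m, q ^ i) - T := by
    show (q ^ m - 1) / (q - 1) - ((∑ i, q ^ (A i).card) - t) / (q - 1) = _
    rw [hNdiv, hTdiv]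
  rw [hn, Nat.cast_sub hTN]
  rw [Finset.sum_congr rfl hceil, Finset.sum_sub_distrib]
  congr 1
  · rw [← Finset.sum_range_reflect (fun i => q ^ i) m]
    exact Nat.cast_sum _ _
  · rw [← hTswap]
    exact Nat.cast_sum _ _
end

section
/- If d = q^{m−1} − Σ_{j=g}^{h} b_j q^j with digits 0 ≤ b_j ≤ q−1 and Σ_{j=g}^h b_j q^j < q^{m-1}, then Σ_{i=0}^{m−1} ⌈d/q^i⌉ = (q^m−1)/(q−1) − (Σ_{j=g}^h b_j q^{j+1} − Σ_{j=g}^h b_j)/(q−1). -/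
open Finset

/-- Griesmer sum identity: if `d = q^{m-1} - Σ_{j=g}^{h} b_j q^j` with digits `0 ≤ b_j ≤ q-1`
and `Σ b_j q^j < q^{m-1}`, then
`Σ_{i=0}^{m-1} ⌈d/q^i⌉ = (q^m-1)/(q-1) - (Σ b_j q^{j+1} - Σ b_j)/(q-1)`. -/
theorem stmt10 {q m g h : ℕ} (hq : 2 ≤ q) (hm : 1 ≤ m) (hgh : g ≤ h) (hh : h ≤ m - 2)
    (b : ℕ → ℕ) (hb : ∀ j ∈ Finset.Icc g h, b j ≤ q - 1)
    (hT : ∑ j ∈ Finset.Icc g h, b j * q ^ j < q ^ (m - 1)) :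
    let d := q ^ (m - 1) - ∑ j ∈ Finset.Icc g h, b j * q ^ j
    (∑ i ∈ Finset.range m, ⌈(d : ℚ) / (q : ℚ) ^ i⌉)
      = ((q ^ m - 1) / (q - 1)
          - ((∑ j ∈ Finset.Icc g h, b j * q ^ (j + 1)) - ∑ j ∈ Finset.Icc g h, b j) / (q - 1)
          : ℕ) := by
  intro d
  set T := ∑ j ∈ Finset.Icc g h, b j * q ^ j with hTdef
  have hq0 : 0 < q := by omega
  -- step 1: digit division
  have hdiv : ∀ i : ℕ, T / q ^ i
      = ∑ j ∈ (Finset.Icc g h).filter (fun j => i ≤ j), b j * q ^ (j - i) := by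
    intro i
    have hsplit : T = q ^ i * (∑ j ∈ (Finset.Icc g h).filter (fun j => i ≤ j),
        b j * q ^ (j - i)) + ∑ j ∈ (Finset.Icc g h).filter (fun j => ¬ i ≤ j), b j * q ^ j := by
      rw [Finset.mul_sum, hTdef,
        ← Finset.sum_filter_add_sum_filter_not (Finset.Icc g h) (fun j => i ≤ j)]
      congr 1
      refine Finset.sum_congr rfl fun j hj => ?_
      simp only [Finset.mem_filter] at hj
      rw [show q ^ i * (b j * q ^ (j - i)) = b j * (q ^ i * q ^ (j - i)) by ring,
        ← pow_add, Nat.add_sub_cancel' hj.2, mul_comm]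
    have hlow : ∑ j ∈ (Finset.Icc g h).filter (fun j => ¬ i ≤ j), b j * q ^ j < q ^ i := by
      have h1 : ∑ j ∈ (Finset.Icc g h).filter (fun j => ¬ i ≤ j), b j * q ^ j
          ≤ ∑ j ∈ (Finset.Icc g h).filter (fun j => ¬ i ≤ j), (q - 1) * q ^ j := by
        refine Finset.sum_le_sum fun j hj => ?_
        simp only [Finset.mem_filter] at hj
        exact Nat.mul_le_mul_right _ (hb j hj.1)
      have h2 : ∑ j ∈ (Finset.Icc g h).filter (fun j => ¬ i ≤ j), (q - 1) * q ^ j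
          ≤ ∑ j ∈ Finset.range i, (q - 1) * q ^ j := by
        refine Finset.sum_le_sum_of_subset_of_nonneg ?_ (fun _ _ _ => Nat.zero_le _)
        intro j hj
        simp only [Finset.mem_filter, Finset.mem_range] at hj ⊢
        omega
      have h3 : ∑ j ∈ Finset.range i, (q - 1) * q ^ j = q ^ i - 1 := by
        rw [← Finset.mul_sum, Nat.geomSum_eq hq,
          Nat.mul_div_cancel' (by simpa using Nat.sub_dvd_pow_sub_pow q 1 i)]
      have h4 : 0 < q ^ i := Nat.pow_pos (n := i) hq0
      omega
    rw [hsplit, Nat.mul_add_div (Nat.pow_pos (n := i) hq0), Nat.div_eq_of_lt hlow, add_zero]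
  -- step 2: summing the divisions
  have hjm : ∀ j ∈ Finset.Icc g h, j < m := by
    intro j hj
    simp only [Finset.mem_Icc] at hj
    omega
  have hsum : ∑ i ∈ Finset.range m, T / q ^ i
      = ∑ j ∈ Finset.Icc g h, b j * ((q ^ (j + 1) - 1) / (q - 1)) := by
    calc ∑ i ∈ Finset.range m, T / q ^ i
        = ∑ i ∈ Finset.range m, ∑ j ∈ Finset.Icc g h,
            if i ≤ j then b j * q ^ (j - i) else 0 := by
          refine Finset.sum_congr rfl fun i _ => ?_
          rw [hdiv i, Finset.sum_filter]
      _ = ∑ j ∈ Finset.Icc g h, ∑ i ∈ Finset.range m,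
            if i ≤ j then b j * q ^ (j - i) else 0 := Finset.sum_comm
      _ = ∑ j ∈ Finset.Icc g h, b j * ((q ^ (j + 1) - 1) / (q - 1)) := by
          refine Finset.sum_congr rfl fun j hj => ?_
          rw [← Finset.sum_filter]
          have hfil : (Finset.range m).filter (fun i => i ≤ j) = Finset.range (j + 1) := by
            ext i
            simp only [Finset.mem_filter, Finset.mem_range]
            have := hjm j hj
            omega
          rw [hfil, ← Finset.mul_sum]
          congr 1
          calc ∑ i ∈ Finset.range (j + 1), q ^ (j - i)
              = ∑ i ∈ Finset.range (j + 1), q ^ (j + 1 - 1 - i) := rfl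
            _ = ∑ i ∈ Finset.range (j + 1), q ^ i := Finset.sum_range_reflect _ _
            _ = (q ^ (j + 1) - 1) / (q - 1) := Nat.geomSum_eq hq _
  -- abbreviations
  set S1 := ∑ j ∈ Finset.Icc g h, b j * q ^ (j + 1) with hS1
  set S0 := ∑ j ∈ Finset.Icc g h, b j with hS0
  have hq1 : 0 < q - 1 := by omega
  -- step 3: closed form of the division sum
  have hUeq : ∑ j ∈ Finset.Icc g h, b j * ((q ^ (j + 1) - 1) / (q - 1))
      = (S1 - S0) / (q - 1) := by
    symm
    apply Nat.div_eq_of_eq_mul_left hq1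
    rw [Finset.sum_mul]
    have hterm : ∀ j ∈ Finset.Icc g h,
        b j * ((q ^ (j + 1) - 1) / (q - 1)) * (q - 1) = b j * q ^ (j + 1) - b j := by
      intro j hj
      rw [mul_assoc, Nat.div_mul_cancel (by simpa using Nat.sub_dvd_pow_sub_pow q 1 (j + 1)),
        Nat.mul_sub, mul_one]
    rw [Finset.sum_congr rfl hterm,
      Finset.sum_tsub_distrib _ (fun j _ => Nat.le_mul_of_pos_right _ (Nat.pow_pos hq0))]
  -- step 4: the ceiling of each term
  have hceil : ∀ i ∈ Finset.range m,
      ⌈(d : ℚ) / (q : ℚ) ^ i⌉ = ((q ^ (m - 1 - i) : ℕ) : ℤ) - ((T / q ^ i : ℕ) : ℤ) := by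
    intro i hi
    rw [Finset.mem_range] at hi
    have him : i ≤ m - 1 := by omega
    have hneg : (d : ℚ) / (q : ℚ) ^ i = -((-(d : ℚ)) / ((q ^ i : ℕ) : ℚ)) := by
      push_cast
      ring
    have hfl : ⌊(-(d : ℚ)) / ((q ^ i : ℕ) : ℚ)⌋ = (-(d : ℤ)) / ((q ^ i : ℕ) : ℤ) := by
      rw [← Rat.floor_intCast_div_natCast (-(d : ℤ)) (q ^ i)]
      norm_cast
    rw [hneg, Int.ceil_neg, hfl]
    have hd' : -(d : ℤ) = (T : ℤ) + (-((q ^ (m - 1 - i) : ℕ) : ℤ)) * ((q ^ i : ℕ) : ℤ) := by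
      have hd0 : d = q ^ (m - 1) - T := rfl
      have hle : T ≤ q ^ (m - 1) := hT.le
      have hdn : (d : ℤ) = ((q ^ (m - 1) : ℕ) : ℤ) - (T : ℤ) := by omega
      have hpow : ((q ^ (m - 1 - i) : ℕ) : ℤ) * ((q ^ i : ℕ) : ℤ) = ((q ^ (m - 1) : ℕ) : ℤ) := by
        push_cast
        rw [← pow_add]
        congr 1
        omega
      rw [hdn]
      rw [neg_mul, ← hpow]
      ring
    rw [hd', Int.add_mul_ediv_right _ _ (by positivity : ((q ^ i : ℕ) : ℤ) ≠ 0)]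
    rw [(Int.natCast_div T (q ^ i) : ((T / q ^ i : ℕ) : ℤ) = _).symm]
    ring
  -- step 5: geometric sum
  have hG : ∑ i ∈ Finset.range m, q ^ (m - 1 - i) = (q ^ m - 1) / (q - 1) := by
    rw [← Nat.geomSum_eq hq m]
    exact Finset.sum_range_reflect (fun k => q ^ k) m
  -- step 6: the bound U ≤ G
  have hS1T : S1 = q * T := by
    rw [hTdef, hS1, Finset.mul_sum]
    refine Finset.sum_congr rfl fun j _ => ?_
    ring
  have hqm : q * q ^ (m - 1) = q ^ m := by
    rw [← pow_succ']
    congr 1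
    omega
  have hUG : (S1 - S0) / (q - 1) ≤ (q ^ m - 1) / (q - 1) := by
    apply Nat.div_le_div_right
    have h1 : S1 ≤ q ^ m - q := by
      rw [hS1T]
      have : q * T ≤ q * (q ^ (m - 1) - 1) := Nat.mul_le_mul_left q (by omega)
      have h2 : q * (q ^ (m - 1) - 1) = q * q ^ (m - 1) - q := by
        rw [Nat.mul_sub, mul_one]
      omega
    have hqq : q ≤ q ^ m := Nat.le_self_pow (by omega) q
    omega
  -- conclusion
  calc (∑ i ∈ Finset.range m, ⌈(d : ℚ) / (q : ℚ) ^ i⌉)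
      = ∑ i ∈ Finset.range m, (((q ^ (m - 1 - i) : ℕ) : ℤ) - ((T / q ^ i : ℕ) : ℤ)) :=
        Finset.sum_congr rfl hceil
    _ = ((∑ i ∈ Finset.range m, q ^ (m - 1 - i) : ℕ) : ℤ)
        - ((∑ i ∈ Finset.range m, T / q ^ i : ℕ) : ℤ) := by
        rw [Finset.sum_sub_distrib]
        push_cast
        ring
    _ = (((q ^ m - 1) / (q - 1) : ℕ) : ℤ) - (((S1 - S0) / (q - 1) : ℕ) : ℤ) := by
        rw [hG, hsum, hUeq]
    _ = (((q ^ m - 1) / (q - 1) - (S1 - S0) / (q - 1) : ℕ) : ℤ) := by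
        rw [Nat.cast_sub hUG]
end

section
/- Let m > 3, t > 2, and A₁,...,A_t be nonempty pairwise disjoint subsets of [m], D = ∪ P_{A_i}. Then |D| = (Σ_{i=1}^t q^{|A_i|} − t)/(q−1) ≤ (q^{m−1} − q)/(q−1), and consequently C_{D^c} has (2,q)-locality. -/
/-!
Normalising the first nonzero coordinate writes every nonzero vector uniquely as `c • p` with `c`
a unit and `p` a point of `PG(m-1,q)`, so `(q-1)|P_A| = q^|A| - 1`; the `P_{A_i}` are disjoint
because a point of `P_A` has its leading coordinate in `A`. The bound on `|D|` comes from
`∑ xᵢ + 1 ≤ ∏ xᵢ + t` for `xᵢ = q^(|A_i|-1) ≥ 1`, with `t ≤ m ≤ q^(m-2)` absorbing the error.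
For locality, the lines joining `g ∉ D` to the points of `D` cover at most `q|D| + 1` points,
fewer than `|PG(m-1,q)|`, so some line through `g` avoids `D`; it has `q + 1` points, and a
linear form that is nonzero on it vanishes at one of them at most.
-/

open Matrix Finset

/-- `P_A`: projective points supported on `A`. -/
def PA (F : Type*) [Field F] [Fintype F] [DecidableEq F] {m : ℕ} (A : Finset (Fin m)) :
    Finset (Fin m → F) :=
  (projPoints F m).filter fun v => ∀ i ∉ A, v i = 0

def projLine (F : Type*) [Field F] [Fintype F] [DecidableEq F] {m : ℕ} (g h : Fin m → F) :
    Finset (Fin m → F) :=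
  (projPoints F m).filter fun v => ∃ a b : F, v = a • g + b • h

lemma sum_add_one_le_prod_add_card {ι : Type*} (s : Finset ι) (f : ι → ℕ)
    (hf : ∀ i ∈ s, 1 ≤ f i) : ∑ i ∈ s, f i + 1 ≤ ∏ i ∈ s, f i + #s := by
  induction s using Finset.cons_induction with
  | empty => simp
  | cons i s hi ih =>
    rw [sum_cons, prod_cons, card_cons]
    have hfi := hf i (mem_cons_self i s)
    have hs := ih fun j hj => hf j (mem_cons_of_mem hj)
    have hprod : 0 < ∏ j ∈ s, f j := prod_pos fun j hj => hf j (mem_cons_of_mem hj)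
    nlinarith

lemma sum_pow_add_le_pow_add_card {ι : Type*} {q m : ℕ} (s : Finset ι) (a : ι → ℕ)
    (hq : 2 ≤ q) (hm : 4 ≤ m) (hs : 3 ≤ #s) (ha : ∀ i ∈ s, 1 ≤ a i)
    (hsum : ∑ i ∈ s, a i ≤ m) : ∑ i ∈ s, q ^ a i + q ≤ q ^ (m - 1) + #s := by
  have hprod := sum_add_one_le_prod_add_card s (fun i => q ^ (a i - 1))
    fun i _ => Nat.one_le_pow _ _ (by omega)
  rw [prod_pow_eq_pow_sum] at hprod
  have hcard : #s ≤ ∑ i ∈ s, a i := by simpa using card_nsmul_le_sum s a 1 ha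
  have hexp : ∑ i ∈ s, (a i - 1) ≤ m - 3 := by
    rw [sum_tsub_distrib s ha, sum_const, smul_eq_mul, mul_one]
    omega
  have hsplit : ∑ i ∈ s, q ^ a i = q * ∑ i ∈ s, q ^ (a i - 1) := by
    rw [mul_sum]
    refine sum_congr rfl fun i hi => ?_
    rw [← pow_succ', Nat.sub_add_cancel (ha i hi)]
  have hpow : q ^ ∑ i ∈ s, (a i - 1) ≤ q ^ (m - 3) := Nat.pow_le_pow_right (by omega) hexp
  have hm3 : m - 3 < q ^ (m - 3) := Nat.lt_pow_self (by omega)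
  have hm2 : q ^ (m - 2) = q * q ^ (m - 3) := by rw [← pow_succ']; congr 1; omega
  have hm1 : q ^ (m - 1) = q * q ^ (m - 2) := by rw [← pow_succ']; congr 1; omega
  have hsm : #s ≤ q ^ (m - 2) := by
    have h2 : 2 * q ^ (m - 3) ≤ q * q ^ (m - 3) := Nat.mul_le_mul_right _ hq
    omega
  rw [hsplit, hm1]
  nlinarith

namespace ProjPoints

variable {F : Type*} [Field F] [Fintype F] [DecidableEq F] {m : ℕ} {g h : Fin m → F}

lemma ne_zero_of_mem {p : Fin m → F} (hp : p ∈ projPoints F m) : p ≠ 0 := by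
  obtain ⟨i, hi, -⟩ := (mem_filter.1 hp).2
  rintro rfl
  exact zero_ne_one hi

/-- `p` and `c • p` have the same first nonzero coordinate. -/
lemma eq_one_of_smul_mem {c : F} {p : Fin m → F} (hp : p ∈ projPoints F m)
    (hcp : c • p ∈ projPoints F m) : c = 1 := by
  obtain ⟨i, hi, hi_lt⟩ := (mem_filter.1 hp).2
  obtain ⟨k, hk, hk_lt⟩ := (mem_filter.1 hcp).2
  simp only [Pi.smul_apply, smul_eq_mul] at hk hk_lt
  have hki : k = i := by
    rcases lt_trichotomy k i with h | h | h
    · simp [hi_lt k h] at hk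
    · exact h
    · have hc : c = 0 := by simpa [hi] using hk_lt i h
      simp [hc] at hk
  simpa [hki, hi] using hk

lemma eq_of_smul_eq_smul {c c' : F} {p p' : Fin m → F} (hp : p ∈ projPoints F m)
    (hp' : p' ∈ projPoints F m) (hc : c ≠ 0) (h : c • p = c' • p') : p = p' := by
  have hpp' : p = (c⁻¹ * c') • p' := by rw [mul_smul, ← h, inv_smul_smul₀ hc]
  rw [hpp'] at hp ⊢
  rw [eq_one_of_smul_mem hp' hp, one_smul]

lemma exists_units_smul_mem {v : Fin m → F} (hv : v ≠ 0) :
    ∃ c : Fˣ, c • v ∈ projPoints F m := by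
  have hne : (univ.filter fun j => v j ≠ 0).Nonempty := by
    simpa [Finset.Nonempty, funext_iff] using hv
  set i := (univ.filter fun j => v j ≠ 0).min' hne
  have hvi : v i ≠ 0 := (mem_filter.1 (min'_mem _ hne)).2
  refine ⟨Units.mk0 (v i)⁻¹ (inv_ne_zero hvi), mem_filter.2 ⟨mem_univ _, i, ?_, fun j hj => ?_⟩⟩
  · simp [hvi]
  · have : v j = 0 := by
      by_contra h
      exact (min'_le _ j (mem_filter.2 ⟨mem_univ _, h⟩)).not_gt hj
    simp [this]

lemma card_filter_ne_zero_and (Q : (Fin m → F) → Prop) [DecidablePred Q]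
    (hQ : ∀ (c : Fˣ) v, Q v → Q (c • v)) :
    #(univ.filter fun v => v ≠ 0 ∧ Q v) = (Fintype.card F - 1) * #((projPoints F m).filter Q) := by
  have himage : univ.filter (fun v => v ≠ 0 ∧ Q v) =
      (univ ×ˢ (projPoints F m).filter Q).image fun cp : Fˣ × (Fin m → F) => cp.1 • cp.2 := by
    ext v
    simp only [mem_filter, mem_univ, true_and, mem_image, mem_product, Prod.exists]
    constructor
    · rintro ⟨hv, hQv⟩
      obtain ⟨c, hc⟩ := exists_units_smul_mem hv
      exact ⟨c⁻¹, c • v, ⟨hc, hQ c v hQv⟩, inv_smul_smul c v⟩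
    · rintro ⟨c, p, ⟨hp, hQp⟩, rfl⟩
      refine ⟨?_, hQ c p hQp⟩
      rw [Units.smul_def]
      exact smul_ne_zero c.ne_zero (ne_zero_of_mem hp)
  rw [himage, card_image_of_injOn, card_product, card_univ, Fintype.card_units]
  rintro ⟨c, p⟩ hcp ⟨c', p'⟩ hcp' h
  simp only [mem_coe, mem_product, mem_filter] at hcp hcp'
  simp only [Units.smul_def] at h
  obtain rfl : p = p' := eq_of_smul_eq_smul hcp.2.1 hcp'.2.1 c.ne_zero h
  obtain rfl : c = c' := Units.ext (smul_left_injective F (ne_zero_of_mem hcp.2.1) h)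
  rfl

lemma card_filter_forall_notMem_eq_zero (A : Finset (Fin m)) :
    #(univ.filter fun v : Fin m → F => ∀ i ∉ A, v i = 0) = Fintype.card F ^ #A := by
  have : (univ.filter fun v : Fin m → F => ∀ i ∉ A, v i = 0) =
      Fintype.piFinset fun i => if i ∈ A then univ else {0} := by
    ext v
    simp only [mem_filter, mem_univ, true_and, Fintype.mem_piFinset]
    refine ⟨fun h i => ?_, fun h i hi => by simpa [hi] using h i⟩
    by_cases hi : i ∈ A <;> simp [hi, h]
  simp only [this, Fintype.card_piFinset, apply_ite card, card_univ, card_singleton]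
  rw [prod_ite_mem, univ_inter, prod_const]

lemma sub_one_mul_card_PA (A : Finset (Fin m)) :
    (Fintype.card F - 1) * #(PA F A) = Fintype.card F ^ #A - 1 := by
  have : (univ.filter fun v : Fin m → F => v ≠ 0 ∧ ∀ i ∉ A, v i = 0) =
      (univ.filter fun v : Fin m → F => ∀ i ∉ A, v i = 0).erase 0 := by
    ext v
    simp
  rw [PA, ← card_filter_ne_zero_and _ fun c v hv i hi => by simp [hv i hi], this,
    card_erase_of_mem (by simp), card_filter_forall_notMem_eq_zero]

lemma sub_one_mul_card_projPoints :
    (Fintype.card F - 1) * #(projPoints F m) = Fintype.card F ^ m - 1 := by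
  simpa [PA] using sub_one_mul_card_PA (F := F) (univ : Finset (Fin m))

lemma disjoint_PA {A B : Finset (Fin m)} (h : Disjoint A B) : Disjoint (PA F A) (PA F B) := by
  refine disjoint_left.2 fun v hvA hvB => ?_
  obtain ⟨hv, hvA⟩ := mem_filter.1 hvA
  obtain ⟨i, hi, -⟩ := (mem_filter.1 hv).2
  have hmem : ∀ {C : Finset (Fin m)}, (∀ j ∉ C, v j = 0) → i ∈ C := fun hC =>
    by_contra fun hiC => one_ne_zero (hi ▸ hC i hiC)
  exact disjoint_left.1 h (hmem hvA) (hmem (mem_filter.1 hvB).2)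

lemma eq_zero_of_smul_add_smul_eq_zero (hg : g ∈ projPoints F m) (hh : h ∈ projPoints F m)
    (hgh : g ≠ h) {a b : F} (hab : a • g + b • h = 0) : a = 0 ∧ b = 0 := by
  have hb : b = 0 := by
    by_contra hb
    have : b • h = (-a) • g := by rw [neg_smul, eq_neg_iff_add_eq_zero, add_comm, hab]
    exact hgh (eq_of_smul_eq_smul hh hg hb this).symm
  subst hb
  simpa [ne_zero_of_mem hg] using hab

lemma card_projLine (hg : g ∈ projPoints F m) (hh : h ∈ projPoints F m) (hgh : g ≠ h) :
    #(projLine F g h) = Fintype.card F + 1 := by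
  have hspan : (univ.filter fun v : Fin m → F => ∃ a b : F, v = a • g + b • h) =
      univ.image fun ab : F × F => ab.1 • g + ab.2 • h := by
    ext v
    simp [eq_comm]
  have hinj : Function.Injective fun ab : F × F => ab.1 • g + ab.2 • h := by
    rintro ⟨a, b⟩ ⟨a', b'⟩ hab
    have := eq_zero_of_smul_add_smul_eq_zero hg hh hgh (a := a - a') (b := b - b')
      (by simp only at hab; rw [sub_smul, sub_smul]; linear_combination (norm := module) hab)
    simp only [sub_eq_zero] at this
    rw [this.1, this.2]
  have hcone : #(univ.filter fun v : Fin m → F => v ≠ 0 ∧ ∃ a b : F, v = a • g + b • h) =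
      Fintype.card F ^ 2 - 1 := by
    have : (univ.filter fun v : Fin m → F => v ≠ 0 ∧ ∃ a b : F, v = a • g + b • h) =
        (univ.filter fun v : Fin m → F => ∃ a b : F, v = a • g + b • h).erase 0 := by
      ext v
      simp
    rw [this, card_erase_of_mem (mem_filter.2 ⟨mem_univ _, 0, 0, by simp⟩), hspan,
      card_image_of_injective _ hinj, card_univ, Fintype.card_prod, sq]
  have hq : 0 < Fintype.card F - 1 := Nat.sub_pos_of_lt Fintype.one_lt_card
  refine Nat.eq_of_mul_eq_mul_left hq ?_
  rw [projLine, ← card_filter_ne_zero_and, hcone, ← one_pow 2, Nat.sq_sub_sq, mul_comm, one_pow]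
  rintro c v ⟨a, b, rfl⟩
  exact ⟨c * a, c * b, by simp only [Units.smul_def, smul_add, smul_smul]⟩

lemma mem_projLine_left (hg : g ∈ projPoints F m) : g ∈ projLine F g h :=
  mem_filter.2 ⟨hg, 1, 0, by simp⟩

lemma mem_projLine_of_mem_projLine {v : Fin m → F} (hg : g ∈ projPoints F m)
    (hh : h ∈ projPoints F m) (hv : v ∈ projLine F g h) (hvg : v ≠ g) : h ∈ projLine F g v := by
  obtain ⟨hvP, a, b, rfl⟩ := mem_filter.1 hv
  have hb : b ≠ 0 := by
    rintro rfl
    refine hvg (eq_of_smul_eq_smul hvP hg one_ne_zero (c' := a) ?_)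
    simp
  refine mem_filter.2 ⟨hh, -(b⁻¹ * a), b⁻¹, ?_⟩
  rw [smul_add, smul_smul, neg_smul, smul_smul, inv_mul_cancel₀ hb, one_smul]
  abel

/-- Two zeros `d₁, d₂` of the form make the determinant of their coordinates in `g, h` vanish,
so `d₁` and `d₂` are proportional. -/
lemma card_filter_dotProduct_eq_zero_le_one {x : Fin m → F}
    (hx : ∃ d ∈ projLine F g h, x ⬝ᵥ d ≠ 0) :
    #((projLine F g h).filter fun d => x ⬝ᵥ d = 0) ≤ 1 := by
  have hdot : ∀ a b : F, x ⬝ᵥ (a • g + b • h) = a * (x ⬝ᵥ g) + b * (x ⬝ᵥ h) := by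
    simp [dotProduct_add, dotProduct_smul]
  have huw : x ⬝ᵥ g ≠ 0 ∨ x ⬝ᵥ h ≠ 0 := by
    obtain ⟨d, hd, hxd⟩ := hx
    obtain ⟨-, a, b, rfl⟩ := mem_filter.1 hd
    by_contra! h0
    simp [hdot, h0] at hxd
  refine card_le_one.2 fun d₁ hd₁ d₂ hd₂ => ?_
  simp only [projLine, mem_filter] at hd₁ hd₂
  obtain ⟨⟨hd₁P, a₁, b₁, rfl⟩, h₁⟩ := hd₁
  obtain ⟨⟨hd₂P, a₂, b₂, rfl⟩, h₂⟩ := hd₂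
  rw [hdot] at h₁ h₂
  have hdet : a₁ * b₂ - a₂ * b₁ = 0 := by
    rcases huw with hu | hw
    · exact (mul_eq_zero.1 (by linear_combination b₂ * h₁ - b₁ * h₂ :
        (a₁ * b₂ - a₂ * b₁) * x ⬝ᵥ g = 0)).resolve_right hu
    · exact (mul_eq_zero.1 (by linear_combination a₁ * h₂ - a₂ * h₁ :
        (a₁ * b₂ - a₂ * b₁) * x ⬝ᵥ h = 0)).resolve_right hw
  by_cases hb₂ : b₂ = 0
  · have ha₂ : a₂ ≠ 0 := by
      rintro rfl
      exact ne_zero_of_mem hd₂P (by simp [hb₂])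
    exact eq_of_smul_eq_smul hd₁P hd₂P ha₂ (c' := a₁)
      (by linear_combination (norm := module) -(hdet • h))
  · exact eq_of_smul_eq_smul hd₁P hd₂P hb₂ (c' := b₁)
      (by linear_combination (norm := module) hdet • g)

lemma le_card_filter_dotProduct_ne_zero (hg : g ∈ projPoints F m) (hh : h ∈ projPoints F m)
    (hgh : g ≠ h) {x : Fin m → F} (hx : ∃ d ∈ projLine F g h, x ⬝ᵥ d ≠ 0) :
    Fintype.card F ≤ #((projLine F g h).filter fun d => x ⬝ᵥ d ≠ 0) := by
  have hsplit := card_filter_add_card_filter_not (s := projLine F g h) fun d => x ⬝ᵥ d = 0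
  have hzero := card_filter_dotProduct_eq_zero_le_one hx
  rw [card_projLine hg hh hgh] at hsplit
  simp only [ne_eq]
  omega

lemma exists_projLine_disjoint {D : Finset (Fin m → F)} (hD : D ⊆ projPoints F m)
    (hcard : Fintype.card F * #D + 1 < #(projPoints F m)) (hg : g ∈ projPoints F m)
    (hgD : g ∉ D) : ∃ h ∈ projPoints F m, g ≠ h ∧ Disjoint (projLine F g h) D := by
  set B := D.biUnion fun p => (projLine F g p).erase g
  have hB : #B ≤ Fintype.card F * #D := by
    refine (card_biUnion_le_card_mul _ _ _ fun p hp => ?_).trans_eq (mul_comm _ _)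
    have hgp : g ≠ p := fun hgp => hgD (hgp ▸ hp)
    rw [card_erase_of_mem (mem_projLine_left hg), card_projLine hg (hD hp) hgp]
    simp
  obtain ⟨h, hh, hhB⟩ := exists_mem_notMem_of_card_lt_card (s := insert g B)
    (t := projPoints F m) ((card_insert_le g B).trans_lt (by omega))
  rw [mem_insert, not_or] at hhB
  refine ⟨h, hh, Ne.symm hhB.1, disjoint_left.2 fun v hvL hvD => hhB.2 ?_⟩
  have hvg : v ≠ g := fun hvg => hgD (hvg ▸ hvD)
  exact mem_biUnion.2 ⟨v, hvD, mem_erase.2 ⟨hhB.1, mem_projLine_of_mem_projLine hg hh hvL hvg⟩⟩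

lemma mul_add_one_lt_card_projPoints {d : ℕ} (hm : 2 ≤ m)
    (hd : (Fintype.card F - 1) * d ≤ Fintype.card F ^ (m - 1) - Fintype.card F) :
    Fintype.card F * d + 1 < #(projPoints F m) := by
  have hP := sub_one_mul_card_projPoints (F := F) (m := m)
  obtain ⟨r, hr⟩ : ∃ r, Fintype.card F = r + 1 :=
    ⟨_, (Nat.sub_add_cancel Fintype.card_pos).symm⟩
  have hr1 : 1 ≤ r := by have := Fintype.one_lt_card (α := F); omega
  obtain ⟨e, he⟩ : ∃ e, Fintype.card F ^ (m - 1) = Fintype.card F + e :=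
    Nat.exists_eq_add_of_le (Nat.le_self_pow (by omega) _)
  have hm1 : Fintype.card F ^ m = Fintype.card F * Fintype.card F ^ (m - 1) := by
    rw [← pow_succ']; congr 1; omega
  rw [hm1, he, hr] at hP
  rw [he, hr] at hd
  simp only [Nat.add_sub_cancel, Nat.add_sub_cancel_left] at hP hd
  have hP' : r * #(projPoints F m) + 1 = (r + 1) * (r + 1 + e) := by
    have : 1 ≤ (r + 1) * (r + 1 + e) := Nat.one_le_iff_ne_zero.2 (by positivity)
    omega
  rw [hr]
  nlinarith

lemma sub_one_mul_card_biUnion_PA {ι : Type*} (s : Finset ι) (A : ι → Finset (Fin m))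
    (hA : (s : Set ι).PairwiseDisjoint A) :
    (Fintype.card F - 1) * #(s.biUnion fun i => PA F (A i)) =
      ∑ i ∈ s, Fintype.card F ^ #(A i) - #s := by
  rw [card_biUnion fun i hi j hj hij => disjoint_PA (hA hi hj hij), mul_sum,
    sum_congr rfl fun i _ => sub_one_mul_card_PA (A i),
    sum_tsub_distrib s fun i _ => Nat.one_le_pow _ _ Fintype.card_pos, sum_const, smul_eq_mul,
    mul_one]

end ProjPoints

open ProjPoints

/-- For `m > 3`, `t > 2` and `A_i` nonempty pairwise disjoint,
`|D| = (Σ q^{|A_i|} - t)/(q-1) ≤ (q^{m-1}-q)/(q-1)`, and hence `C_{D^c}` has `(2,q)`-locality. -/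
theorem stmt11 {F : Type*} [Field F] [Fintype F] [DecidableEq F] {m t q : ℕ}
    (hq : Fintype.card F = q) (hm : 3 < m) (ht : 2 < t)
    (A : Fin t → Finset (Fin m)) (hne : ∀ i, (A i).Nonempty)
    (hdisj : ∀ i j, i ≠ j → Disjoint (A i) (A j)) :
    let D := Finset.univ.biUnion fun i => PA F (A i)
    let Dc := projPoints F m \ D
    D.card = ((∑ i, q ^ (A i).card) - t) / (q - 1) ∧
    D.card ≤ (q ^ (m - 1) - q) / (q - 1) ∧
    ∀ g ∈ Dc, ∃ R : Finset (Fin m → F),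
      R ⊆ Dc ∧ g ∈ R ∧ R.card ≤ q + 1 ∧
      ∀ x : Fin m → F, (∃ d ∈ R, x ⬝ᵥ d ≠ 0) →
        q ≤ (R.filter fun d => x ⬝ᵥ d ≠ 0).card := by
  intro D Dc
  subst hq
  have hq : 2 ≤ Fintype.card F := Fintype.one_lt_card
  have hA : ((univ : Finset (Fin t)) : Set (Fin t)).PairwiseDisjoint A :=
    fun i _ j _ hij => hdisj i j hij
  have hDcard : (Fintype.card F - 1) * #D = ∑ i, Fintype.card F ^ #(A i) - t := by
    simpa using sub_one_mul_card_biUnion_PA univ A hA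
  have hsum : ∑ i, #(A i) ≤ m := by
    simpa [← card_biUnion hA] using card_le_univ (univ.biUnion A)
  have hkey := sum_pow_add_le_pow_add_card univ (fun i => #(A i)) hq (by omega)
    (by simpa using ht.nat_succ_le) (fun i _ => card_pos.2 (hne i)) hsum
  have hDle : (Fintype.card F - 1) * #D ≤ Fintype.card F ^ (m - 1) - Fintype.card F := by
    simp only [card_univ, Fintype.card_fin] at hkey
    omega
  have hq1 : 0 < Fintype.card F - 1 := by omega
  refine ⟨?_, ?_, fun g hg => ?_⟩
  · rw [← hDcard, Nat.mul_div_cancel_left _ hq1]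
  · rwa [Nat.le_div_iff_mul_le hq1, mul_comm]
  obtain ⟨hgP, hgD⟩ := mem_sdiff.1 hg
  have hDP : D ⊆ projPoints F m := biUnion_subset.2 fun i _ => filter_subset _ _
  obtain ⟨h, hhP, hgh, hLD⟩ :=
    exists_projLine_disjoint hDP (mul_add_one_lt_card_projPoints (by omega) hDle) hgP hgD
  exact ⟨projLine F g h, fun v hv => mem_sdiff.2 ⟨filter_subset _ _ hv, disjoint_left.1 hLD hv⟩,
    mem_projLine_left hgP, (card_projLine hgP hhP hgh).le,
    fun x hx => le_card_filter_dotProduct_ne_zero hgP hhP hgh hx⟩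
end

section
/- Let q > 2, m > t = 2, A₁, A₂ ⊆ [m] disjoint with |A₁| = m−1 and |A₂| = 1, and D = P_{A₁} ∪ P_{A₂}. Then |D| = (q^{m−1} + q − 2)/(q−1) ≤ 2(q^{m−1}−1)/(q−1) − 1, and hence the code C_{D^c} has (2, q−1)-locality. -/
open Matrix Finset

section Aux
variable {F : Type*} [Field F] [Fintype F] [DecidableEq F] {m : ℕ}

noncomputable def nlead (v : Fin m → F) : F :=
  if h : (Finset.univ.filter fun i => v i ≠ 0).Nonempty
  then v ((Finset.univ.filter fun i => v i ≠ 0).min' h) else 1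

noncomputable def nrm (v : Fin m → F) : Fin m → F := (nlead v)⁻¹ • v

lemma nlead_ne_zero {v : Fin m → F} (h : ∃ i, v i ≠ 0) : nlead v ≠ 0 := by
  obtain ⟨i, hi⟩ := h
  have hne : (Finset.univ.filter fun i => v i ≠ 0).Nonempty := ⟨i, by simp [hi]⟩
  have hmem := (Finset.univ.filter fun i => v i ≠ 0).min'_mem hne
  simp only [Finset.mem_filter] at hmem
  rw [nlead, dif_pos hne]
  exact hmem.2

lemma nrm_mem {v : Fin m → F} (h : ∃ i, v i ≠ 0) : nrm v ∈ projPoints F m := by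
  obtain ⟨i, hi⟩ := h
  have hne : (Finset.univ.filter fun i => v i ≠ 0).Nonempty := ⟨i, by simp [hi]⟩
  set i₀ := (Finset.univ.filter fun i => v i ≠ 0).min' hne with hi₀
  have hmem := (Finset.univ.filter fun i => v i ≠ 0).min'_mem hne
  simp only [Finset.mem_filter] at hmem
  have hlead : nlead v = v i₀ := by rw [nlead, dif_pos hne]
  refine Finset.mem_filter.2 ⟨Finset.mem_univ _, ⟨i₀, ?_, ?_⟩⟩
  · simp [nrm, hlead]; exact inv_mul_cancel₀ hmem.2
  · intro j hj
    have hvj : v j = 0 := by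
      by_contra hvj
      exact absurd (Finset.min'_le _ j (by simp [hvj])) (not_le.2 hj)
    simp [nrm, hvj]

lemma nlead_proj {v : Fin m → F} (h : v ∈ projPoints F m) : nlead v = 1 := by
  obtain ⟨-, i, hvi, hlt⟩ := Finset.mem_filter.1 h
  have hne : (Finset.univ.filter fun i => v i ≠ 0).Nonempty :=
    ⟨i, by simp [hvi]⟩
  have hle : (Finset.univ.filter fun i => v i ≠ 0).min' hne ≤ i :=
    Finset.min'_le _ i (by simp [hvi])
  have hmem := (Finset.univ.filter fun i => v i ≠ 0).min'_mem hne
  simp only [Finset.mem_filter] at hmem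
  have heq : (Finset.univ.filter fun i => v i ≠ 0).min' hne = i := by
    rcases lt_or_eq_of_le hle with hlt' | h'
    · exact absurd (hlt _ hlt') hmem.2
    · exact h'
  rw [nlead, dif_pos hne, heq, hvi]

lemma nrm_proj {v : Fin m → F} (h : v ∈ projPoints F m) : nrm v = v := by
  simp [nrm, nlead_proj h]

lemma nlead_smul {c : F} (hc : c ≠ 0) {v : Fin m → F} (h : ∃ i, v i ≠ 0) :
    nlead (c • v) = c * nlead v := by
  obtain ⟨i, hi⟩ := h
  have hfil : (Finset.univ.filter fun i => (c • v) i ≠ 0)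
      = (Finset.univ.filter fun i => v i ≠ 0) := by
    ext j; simp [hc]
  have hne : (Finset.univ.filter fun i => v i ≠ 0).Nonempty := ⟨i, by simp [hi]⟩
  have hne' : (Finset.univ.filter fun i => (c • v) i ≠ 0).Nonempty := by
    rw [hfil]; exact hne
  rw [nlead, nlead, dif_pos hne, dif_pos hne']
  have : (Finset.univ.filter fun i => (c • v) i ≠ 0).min' hne'
      = (Finset.univ.filter fun i => v i ≠ 0).min' hne := by
    congr 1 <;> rw [hfil]
  rw [this]; simp

lemma nrm_smul {c : F} (hc : c ≠ 0) {v : Fin m → F} (h : ∃ i, v i ≠ 0) :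
    nrm (c • v) = nrm v := by
  rw [nrm, nrm, nlead_smul hc h, mul_inv, smul_smul]
  congr 1
  rw [mul_comm, ← mul_assoc, mul_inv_cancel₀ hc, one_mul]

lemma card_PA (A : Finset (Fin m)) :
    (Fintype.card F - 1) * (PA F A).card = Fintype.card F ^ A.card - 1 := by
  classical
  set T : Finset (Fin m → F) :=
    Fintype.piFinset fun i => if i ∈ A then (Finset.univ : Finset F) else {0} with hT
  have hTmem : ∀ w : Fin m → F, w ∈ T ↔ ∀ i ∉ A, w i = 0 := by
    intro w
    simp only [hT, Fintype.mem_piFinset]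
    constructor
    · intro h i hi; have := h i; rwa [if_neg hi, Finset.mem_singleton] at this
    · intro h i
      by_cases hi : i ∈ A
      · simp [hi]
      · simp [hi, h i hi]
  have hTcard : T.card = Fintype.card F ^ A.card := by
    rw [hT, Fintype.card_piFinset]
    have : ∀ i : Fin m, ((if i ∈ A then (Finset.univ : Finset F) else {0}).card)
        = if i ∈ A then Fintype.card F else 1 := by
      intro i; by_cases hi : i ∈ A <;> simp [hi]
    rw [Finset.prod_congr rfl fun i _ => this i, Finset.prod_ite_mem,
      Finset.univ_inter, Finset.prod_const]
  have h0T : (0 : Fin m → F) ∈ T := (hTmem 0).2 fun _ _ => rfl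
  set S := T.erase 0 with hS
  have hScard : S.card = Fintype.card F ^ A.card - 1 := by
    rw [hS, Finset.card_erase_of_mem h0T, hTcard]
  have hbij : ((Finset.univ.erase (0 : F)) ×ˢ PA F A).card = S.card := by
    refine Finset.card_bij' (fun p _ => p.1 • p.2) (fun w _ => (nlead w, nrm w))
      ?_ ?_ ?_ ?_
    · rintro ⟨c, v⟩ hp
      simp only [Finset.mem_product, Finset.mem_erase, Finset.mem_univ, and_true] at hp
      obtain ⟨hc, hv⟩ := hp
      obtain ⟨hvP, hvA⟩ := Finset.mem_filter.1 hv
      obtain ⟨-, i, hvi, -⟩ := Finset.mem_filter.1 hvP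
      refine Finset.mem_erase.2 ⟨?_, (hTmem _).2 fun i' hi' => by simp [hvA i' hi']⟩
      intro h0
      have := congrFun h0 i
      simp [hvi, hc] at this
    · rintro w hw
      obtain ⟨hw0, hwT⟩ := Finset.mem_erase.1 hw
      have hex : ∃ i, w i ≠ 0 := by
        by_contra h; push_neg at h
        exact hw0 (funext fun i => h i)
      refine Finset.mem_product.2 ⟨Finset.mem_erase.2 ⟨nlead_ne_zero hex, Finset.mem_univ _⟩, ?_⟩
      refine Finset.mem_filter.2 ⟨nrm_mem hex, fun i hi => ?_⟩
      have := (hTmem w).1 hwT i hi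
      simp [nrm, this]
    · rintro ⟨c, v⟩ hp
      simp only [Finset.mem_product, Finset.mem_erase, Finset.mem_univ, and_true] at hp
      obtain ⟨hc, hv⟩ := hp
      have hvP := (Finset.mem_filter.1 hv).1
      obtain ⟨-, i, hvi, -⟩ := Finset.mem_filter.1 hvP
      have hex : ∃ i, v i ≠ 0 := ⟨i, by simp [hvi]⟩
      have h1 : nlead (c • v) = c := by
        rw [nlead_smul hc hex, nlead_proj hvP, mul_one]
      have h2 : nrm (c • v) = v := by rw [nrm_smul hc hex, nrm_proj hvP]
      simp [h1, h2]
    · rintro w hw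
      obtain ⟨hw0, hwT⟩ := Finset.mem_erase.1 hw
      have hex : ∃ i, w i ≠ 0 := by
        by_contra h; push_neg at h
        exact hw0 (funext fun i => h i)
      simp only [nrm]
      rw [smul_smul, mul_inv_cancel₀ (nlead_ne_zero hex), one_smul]
  rw [← hScard, ← hbij, Finset.card_product, Finset.card_erase_of_mem (Finset.mem_univ _),
    Finset.card_univ]

end Aux

/-- For `q > 2`, `m > 2`, `|A₁| = m-1`, `|A₂| = 1` disjoint, `D = P_{A₁} ∪ P_{A₂}` satisfies
`|D| = (q^{m-1}+q-2)/(q-1) ≤ 2(q^{m-1}-1)/(q-1) - 1`, so `C_{D^c}` has `(2, q-1)`-locality. -/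
theorem stmt12 {F : Type*} [Field F] [Fintype F] [DecidableEq F] {m q : ℕ}
    (hq : Fintype.card F = q) (hq2 : 2 < q) (hm : 2 < m)
    (A₁ A₂ : Finset (Fin m)) (hA₁ : A₁.card = m - 1) (hA₂ : A₂.card = 1)
    (hdisj : Disjoint A₁ A₂) :
    let D := PA F A₁ ∪ PA F A₂
    let Dc := projPoints F m \ D
    D.card = (q ^ (m - 1) + q - 2) / (q - 1) ∧
    D.card ≤ 2 * (q ^ (m - 1) - 1) / (q - 1) - 1 ∧
    ∀ g ∈ Dc, ∃ R : Finset (Fin m → F),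
      R ⊆ Dc ∧ g ∈ R ∧ R.card ≤ q ∧
      ∀ x : Fin m → F, (∃ d ∈ R, x ⬝ᵥ d ≠ 0) →
        q - 1 ≤ (R.filter fun d => x ⬝ᵥ d ≠ 0).card := by
  intro D Dc
  have hq1 : 0 < q - 1 := by omega
  -- cardinalities
  have hc1 : (q - 1) * (PA F A₁).card = q ^ (m - 1) - 1 := by
    have := card_PA (F := F) A₁; rwa [hq, hA₁] at this
  have hc2 : (PA F A₂).card = 1 := by
    have h := card_PA (F := F) A₂
    rw [hq, hA₂, pow_one] at h
    have : (q - 1) * (PA F A₂).card = (q - 1) * 1 := by rw [h, mul_one]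
    exact Nat.eq_of_mul_eq_mul_left hq1 this
  set N := (PA F A₁).card with hN
  have hpow1 : 1 ≤ q ^ (m - 1) := Nat.one_le_pow _ _ (by omega)
  have hqq : q ^ 2 ≤ q ^ (m - 1) := Nat.pow_le_pow_right (by omega) (by omega)
  have hN2 : 2 ≤ N := by
    by_contra h
    push_neg at h
    have ha : q * q ≤ q ^ (m - 1) := by
      have : q * q = q ^ 2 := (sq q).symm
      omega
    have hb : 2 * q ≤ q * q := Nat.mul_le_mul_right q (by omega)
    have hle : (q - 1) * N ≤ (q - 1) * 1 := Nat.mul_le_mul_left _ (by omega)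
    have hx : q ^ (m - 1) - 1 ≤ q - 1 := by
      rw [← hc1]; omega
    omega
  have hDdisj : Disjoint (PA F A₁) (PA F A₂) := by
    rw [Finset.disjoint_left]
    intro v hv1 hv2
    obtain ⟨hvP, hs1⟩ := Finset.mem_filter.1 hv1
    obtain ⟨-, hs2⟩ := Finset.mem_filter.1 hv2
    obtain ⟨-, i, hvi, -⟩ := Finset.mem_filter.1 hvP
    by_cases hi : i ∈ A₁
    · have : i ∉ A₂ := fun h' => (Finset.disjoint_left.1 hdisj) hi h'
      have := hs2 i this
      rw [hvi] at this; exact one_ne_zero this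
    · have := hs1 i hi
      rw [hvi] at this; exact one_ne_zero this
  have hDcard : D.card = N + 1 := by
    rw [Finset.card_union_of_disjoint hDdisj, hc2]
  have heq1 : q ^ (m - 1) + q - 2 = (q - 1) * (N + 1) := by
    have : (q - 1) * (N + 1) = (q - 1) * N + (q - 1) := by ring
    rw [this, hc1]; omega
  refine ⟨?_, ?_, ?_⟩
  · rw [hDcard, heq1, Nat.mul_div_cancel_left _ hq1]
  · have heq2 : 2 * (q ^ (m - 1) - 1) = (q - 1) * (2 * N) := by
      rw [← hc1]; ring
    rw [hDcard, heq2, Nat.mul_div_cancel_left _ hq1]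
    omega
  -- locality
  intro g hg
  obtain ⟨hgP, hgD⟩ := Finset.mem_sdiff.1 hg
  rw [Finset.mem_union, not_or] at hgD
  obtain ⟨hg1, hg2⟩ := hgD
  -- structure of A₁, A₂
  obtain ⟨i₀, hA₂e⟩ := Finset.card_eq_one.1 hA₂
  have hA₁e : A₁ = Finset.univ \ A₂ := by
    apply Finset.eq_of_subset_of_card_le
    · intro i hi
      simp only [Finset.mem_sdiff, Finset.mem_univ, true_and]
      exact fun h' => (Finset.disjoint_left.1 hdisj) hi h'
    · rw [Finset.card_sdiff_of_subset (Finset.subset_univ _), Finset.card_univ, Fintype.card_fin, hA₂, hA₁]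
  have hi₀A₁ : i₀ ∉ A₁ := by
    rw [hA₁e]; simp [hA₂e]
  -- g i₀ ≠ 0
  have hgi₀ : g i₀ ≠ 0 := by
    by_contra h0
    apply hg1
    refine Finset.mem_filter.2 ⟨hgP, fun i hi => ?_⟩
    have : i ∈ A₂ := by
      by_contra h'
      have : i ∈ A₁ := by rw [hA₁e]; simp [Finset.mem_sdiff, h']
      exact hi this
    rw [hA₂e, Finset.mem_singleton] at this
    rwa [this]
  -- a coordinate j' ∈ A₁ with g j' ≠ 0
  have hex2 : ∃ j', j' ∈ A₁ ∧ g j' ≠ 0 := by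
    by_contra h
    push_neg at h
    apply hg2
    refine Finset.mem_filter.2 ⟨hgP, fun i hi => ?_⟩
    rw [hA₂e, Finset.mem_singleton] at hi
    have : i ∈ A₁ := by rw [hA₁e, hA₂e]; simp [hi]
    exact h i this
  obtain ⟨j', hj'A, hgj'⟩ := hex2
  -- choose j ∈ A₁, j ≠ j'
  have hexj : ∃ j, j ∈ A₁ ∧ j ≠ j' := by
    have h2 : 1 < A₁.card := by omega
    obtain ⟨j, hj, hne⟩ := Finset.exists_mem_ne h2 j'
    exact ⟨j, hj, hne⟩
  obtain ⟨j, hjA, hjj'⟩ := hexj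
  have hji₀ : j ≠ i₀ := fun h => hi₀A₁ (h ▸ hjA)
  have hj'i₀ : j' ≠ i₀ := fun h => hi₀A₁ (h ▸ hj'A)
  have hj'A₂ : j' ∉ A₂ := fun h' => (Finset.disjoint_left.1 hdisj) hj'A h'
  set e : Fin m → F := Pi.single j 1 with he
  set v : F → (Fin m → F) := fun t => g + t • e with hv
  have hei₀ : e i₀ = 0 := by
    rw [he]; exact Pi.single_eq_of_ne (Ne.symm hji₀) 1
  have hej' : e j' = 0 := by
    rw [he]; exact Pi.single_eq_of_ne (Ne.symm hjj') 1
  have hvi₀ : ∀ t, v t i₀ = g i₀ := by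
    intro t; simp [hv, hei₀]
  have hvj' : ∀ t, v t j' = g j' := by
    intro t; simp [hv, hej']
  have hvj : ∀ t, v t j = g j + t := by
    intro t; simp [hv, he]
  have hvne : ∀ t, ∃ i, v t i ≠ 0 := fun t => ⟨i₀, by rw [hvi₀]; exact hgi₀⟩
  set f : F → (Fin m → F) := fun t => nrm (v t) with hf
  have hfsm : ∀ t, f t = (nlead (v t))⁻¹ • v t := fun t => rfl
  have hfnl : ∀ t, (nlead (v t))⁻¹ ≠ 0 := fun t => inv_ne_zero (nlead_ne_zero (hvne t))
  refine ⟨Finset.image f Finset.univ, ?_, ?_, ?_, ?_⟩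
  · -- R ⊆ Dc
    intro d hd
    obtain ⟨t, -, rfl⟩ := Finset.mem_image.1 hd
    refine Finset.mem_sdiff.2 ⟨nrm_mem (hvne t), ?_⟩
    rw [Finset.mem_union, not_or]
    constructor
    · intro hmem
      have := (Finset.mem_filter.1 hmem).2 i₀ hi₀A₁
      rw [hfsm, Pi.smul_apply, hvi₀, smul_eq_mul] at this
      exact mul_ne_zero (hfnl t) hgi₀ this
    · intro hmem
      have := (Finset.mem_filter.1 hmem).2 j' hj'A₂
      rw [hfsm, Pi.smul_apply, hvj', smul_eq_mul] at this
      exact mul_ne_zero (hfnl t) hgj' this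
  · -- g ∈ R
    refine Finset.mem_image.2 ⟨0, Finset.mem_univ _, ?_⟩
    have : v 0 = g := by simp [hv]
    rw [hf]; simp only [this]
    exact nrm_proj hgP
  · -- card ≤ q
    calc (Finset.image f Finset.univ).card ≤ (Finset.univ : Finset F).card :=
          Finset.card_image_le
      _ = q := by rw [Finset.card_univ, hq]
  · -- locality property
    intro x hx
    have hinj : Set.InjOn f (Finset.univ : Finset F) := by
      intro t _ s _ hts
      have h1 := congrFun hts i₀
      rw [hfsm, hfsm, Pi.smul_apply, Pi.smul_apply, hvi₀, hvi₀, smul_eq_mul, smul_eq_mul] at h1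
      have hcc : (nlead (v t))⁻¹ = (nlead (v s))⁻¹ := mul_right_cancel₀ hgi₀ h1
      have h2 := congrFun hts j
      rw [hfsm, hfsm, Pi.smul_apply, Pi.smul_apply, hvj, hvj, smul_eq_mul, smul_eq_mul, hcc] at h2
      have := mul_left_cancel₀ (hfnl s) h2
      exact add_left_cancel this
    have hdot : ∀ t, (x ⬝ᵥ f t ≠ 0) ↔ (x ⬝ᵥ g + t * x j ≠ 0) := by
      intro t
      rw [hfsm]
      rw [dotProduct_smul]
      rw [smul_eq_mul]
      have hvt : x ⬝ᵥ v t = x ⬝ᵥ g + t * x j := by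
        rw [hv]
        simp only [dotProduct_add, dotProduct_smul, he,
          dotProduct_single, smul_eq_mul, mul_one]
      rw [hvt]
      constructor
      · intro h hc; rw [hc, mul_zero] at h; exact h rfl
      · intro h; exact mul_ne_zero (hfnl t) h
    rw [Finset.filter_image]
    rw [Finset.card_image_of_injOn (hinj.mono (Finset.filter_subset _ _))]
    -- now count t in univ with the property
    by_cases hxj : x j = 0
    · -- constant case
      obtain ⟨d, hd, hxd⟩ := hx
      obtain ⟨t₁, -, rfl⟩ := Finset.mem_image.1 hd
      have hα : x ⬝ᵥ g ≠ 0 := by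
        have := (hdot t₁).1 hxd
        rwa [hxj, mul_zero, add_zero] at this
      have : (Finset.univ.filter fun t : F => x ⬝ᵥ f t ≠ 0) = Finset.univ := by
        refine Finset.eq_univ_of_forall fun t => Finset.mem_filter.2 ⟨Finset.mem_univ _, ?_⟩
        rw [hdot, hxj, mul_zero, add_zero]; exact hα
      rw [this, Finset.card_univ, hq]; omega
    · -- at most one zero
      have hsub : (Finset.univ.filter fun t : F => ¬ (x ⬝ᵥ f t ≠ 0))
          ⊆ {-(x ⬝ᵥ g) * (x j)⁻¹} := by
        intro t ht
        have := (Finset.mem_filter.1 ht).2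
        rw [not_not] at this
        have h0 : x ⬝ᵥ g + t * x j = 0 := by
          by_contra h'
          exact ((hdot t).2 h') this
        rw [Finset.mem_singleton]
        field_simp
        linear_combination h0
      have hle1 : (Finset.univ.filter fun t : F => ¬ (x ⬝ᵥ f t ≠ 0)).card ≤ 1 := by
        calc _ ≤ ({-(x ⬝ᵥ g) * (x j)⁻¹} : Finset F).card := Finset.card_le_card hsub
          _ = 1 := Finset.card_singleton _
      have hsum := Finset.card_filter_add_card_filter_not
        (s := (Finset.univ : Finset F)) (p := fun t : F => x ⬝ᵥ f t ≠ 0)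
      rw [Finset.card_univ, hq] at hsum
      omega
end

section
/- Plotkin bound: Let C be a q-ary code (not necessarily linear) of length n, minimum distance d, with M codewords. If qd > (q−1)n, then M ≤ qd/(qd − (q−1)n). -/
open Finset

/-- Plotkin bound: a `q`-ary code of length `n` with `M ≥ 2` codewords and minimum distance
at least `d` satisfies `M ≤ qd/(qd - (q-1)n)` whenever `qd > (q-1)n`. -/
theorem stmt13 {A : Type*} [Fintype A] [DecidableEq A] {n q d : ℕ}
    (hq : Fintype.card A = q)
    (C : Finset (Fin n → A)) (hM : 2 ≤ C.card)
    (hd : ∀ u ∈ C, ∀ v ∈ C, u ≠ v → d ≤ hammingDist u v)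
    (hplot : ((q : ℚ) - 1) * n < q * d) :
    (C.card : ℚ) ≤ q * d / (q * d - (q - 1) * n) := by
  have hq2 : 2 ≤ q := by
    by_contra h
    push_neg at h
    have h1 : Fintype.card (Fin n → A) ≤ 1 := by
      rw [Fintype.card_fun, hq, Fintype.card_fin]
      calc q ^ n ≤ 1 ^ n := Nat.pow_le_pow_left (by omega) n
      _ = 1 := one_pow n
    have h2 := hM.trans C.card_le_univ
    omega
  set M : ℚ := (C.card : ℚ) with hMdef
  have hM2 : (2:ℚ) ≤ M := by rw [hMdef]; exact_mod_cast hM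
  have hq0 : (0:ℚ) < q := by positivity
  set T : ℚ := ∑ u ∈ C, ∑ v ∈ C, ∑ i, (if u i = v i then (0:ℚ) else 1) with hT
  have hham : ∀ u v : Fin n → A, ((hammingDist u v : ℕ) : ℚ) = ∑ i, if u i = v i then (0:ℚ) else 1 := by
    intro u v
    rw [hammingDist, card_filter]
    push_cast
    exact Finset.sum_congr rfl fun i _ => by by_cases h : u i = v i <;> simp [h]
  -- lower bound
  have lower : (d:ℚ) * (M * (M - 1)) ≤ T := by
    have step : ∀ u ∈ C, (d:ℚ) * (M - 1) ≤ ∑ v ∈ C, ∑ i, (if u i = v i then (0:ℚ) else 1) := by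
      intro u hu
      have hc1 : 1 ≤ C.card := by omega
      have hcast : ((C.card - 1 : ℕ) : ℚ) = M - 1 := by
        rw [hMdef]; push_cast [hc1]; ring
      calc (d:ℚ) * (M - 1) = ∑ v ∈ C.erase u, (d:ℚ) := by
            rw [Finset.sum_const, Finset.card_erase_of_mem hu, nsmul_eq_mul, hcast]; ring
        _ ≤ ∑ v ∈ C.erase u, ∑ i, (if u i = v i then (0:ℚ) else 1) := by
            apply Finset.sum_le_sum
            intro v hv
            have hv' : v ∈ C := Finset.mem_of_mem_erase hv
            have hne : u ≠ v := fun h => (Finset.ne_of_mem_erase hv) h.symm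
            have := hd u hu v hv' hne
            calc (d:ℚ) ≤ (hammingDist u v : ℚ) := by exact_mod_cast this
              _ = _ := hham u v
        _ ≤ ∑ v ∈ C, ∑ i, (if u i = v i then (0:ℚ) else 1) := by
            apply Finset.sum_le_sum_of_subset_of_nonneg (Finset.erase_subset u C)
            intro v _ _
            positivity
    calc (d:ℚ) * (M * (M-1)) = ∑ _u ∈ C, (d:ℚ) * (M - 1) := by
          rw [Finset.sum_const, nsmul_eq_mul, hMdef]; ring
      _ ≤ T := Finset.sum_le_sum step
  -- per coordinate upper bound
  have per : ∀ i : Fin n, ∑ u ∈ C, ∑ v ∈ C, (if u i = v i then (0:ℚ) else 1)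
      ≤ M ^ 2 * ((q:ℚ) - 1) / q := by
    intro i
    set m : A → ℚ := fun a => ((C.filter fun u => u i = a).card : ℚ) with hm
    have hsum : ∑ a : A, m a = M := by
      rw [hMdef, Finset.card_eq_sum_card_fiberwise (f := fun u => u i) (t := univ)
        (fun x _ => mem_univ _)]
      push_cast
      rfl
    have hsq : ∑ u ∈ C, ∑ v ∈ C, (if u i = v i then (1:ℚ) else 0) = ∑ a : A, m a ^ 2 := by
      have inner : ∀ u ∈ C, ∑ v ∈ C, (if u i = v i then (1:ℚ) else 0) = m (u i) := by
        intro u _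
        rw [Finset.sum_boole, hm]
        simp only [Nat.cast_inj]
        congr 1
        exact Finset.filter_congr fun v _ => by simp [eq_comm]
      rw [Finset.sum_congr rfl inner]
      calc ∑ u ∈ C, m (u i)
          = ∑ a : A, ∑ u ∈ C.filter (fun u => u i = a), m (u i) :=
            (Finset.sum_fiberwise_of_maps_to (fun x _ => mem_univ _) _).symm
        _ = ∑ a : A, m a ^ 2 := by
            refine Finset.sum_congr rfl fun a _ => ?_
            rw [Finset.sum_congr rfl (fun u hu => by rw [(Finset.mem_filter.mp hu).2]),
              Finset.sum_const, nsmul_eq_mul, hm]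
            simp [sq]
    have expand : ∑ u ∈ C, ∑ v ∈ C, (if u i = v i then (0:ℚ) else 1)
        = M * M - ∑ a : A, m a ^ 2 := by
      have hsplit : ∀ u v : Fin n → A,
          (if u i = v i then (0:ℚ) else 1) = 1 - (if u i = v i then 1 else 0) := fun u v => by
        by_cases h : u i = v i <;> simp [h]
      simp_rw [hsplit, Finset.sum_sub_distrib, hsq]
      rw [Finset.sum_const, Finset.sum_const, nsmul_eq_mul, nsmul_eq_mul, hMdef]
      ring
    have hc : M ^ 2 ≤ (q:ℚ) * ∑ a : A, m a ^ 2 := by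
      have := sq_sum_le_card_mul_sum_sq (s := (univ : Finset A)) (f := m)
      rw [hsum] at this
      simpa [Finset.card_univ, hq] using this
    rw [expand, le_div_iff₀ hq0]
    nlinarith [hc]
  -- combine
  have upper : T ≤ (n:ℚ) * (M ^ 2 * ((q:ℚ) - 1) / q) := by
    have swap : T = ∑ i, ∑ u ∈ C, ∑ v ∈ C, (if u i = v i then (0:ℚ) else 1) := by
      rw [hT]
      rw [Finset.sum_congr rfl fun u _ => Finset.sum_comm (s := C) (t := univ)]
      exact Finset.sum_comm
    rw [swap]
    calc ∑ i : Fin n, ∑ u ∈ C, ∑ v ∈ C, (if u i = v i then (0:ℚ) else 1)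
        ≤ ∑ _i : Fin n, M ^ 2 * ((q:ℚ) - 1) / q := Finset.sum_le_sum fun i _ => per i
      _ = (n:ℚ) * (M ^ 2 * ((q:ℚ) - 1) / q) := by
          rw [Finset.sum_const, nsmul_eq_mul, Finset.card_univ, Fintype.card_fin]
  have key : (q:ℚ) * d * (M * (M - 1)) ≤ (n:ℚ) * (M ^ 2 * ((q:ℚ) - 1)) := by
    have h1 := lower.trans upper
    rw [← mul_div_assoc, le_div_iff₀ hq0] at h1
    nlinarith [h1]
  rw [le_div_iff₀ (by linarith)]
  nlinarith [key, hM2, hq0]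
end
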